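/- arXiv:2407.13119 — 8 statements merged into one kernel-verified Lean document; each statement's English description precedes it below -/
import Mathlib

section
/- Let C be an additive category, F an additive endofunctor of C, and M₁, …, M_r objects of C. Assume: (i) for every d ≥ 0 and all indices j, ℓ, every nonzero morphism F^d(M_j) → M_ℓ is an epimorphism; (ii) for all d, e ≥ 0 and all indices j, ℓ, if g : F^e(M_j) → M_ℓ is an epimorphism, then F^d(g) is an epimorphism; (iii) for all indices j ≠ ℓ there exist c ≥ 0 and a nonzero morphism h : F^c(M_j) → M_ℓ. Then for all d, e ≥ 0, all indices i, j, ℓ, m, every nonzero f : F^d(M_j) → M_i and every nonzero g : F^e(M_m) → M_ℓ, there exist c ≥ 0 and a morphism h : F^c(M_ℓ) → M_j such that the composite f ∘ F^d(h) ∘ F^{d+c}(g) : F^{d+c+e}(M_m) → M_i is nonzero. (This is the statement that the orbital ring O(F, M₁ ⊕ ⋯ ⊕ M_r) is a prime ring.) -/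
open CategoryTheory

/-- The `d`-fold iterate of an endofunctor, with `funcIter F 0` the identity functor. -/
def funcIter {C : Type*} [Category C] (F : C ⥤ C) : ℕ → C ⥤ C
  | 0 => 𝟭 C
  | n + 1 => funcIter F n ⋙ F

lemma funcIter_add {C : Type*} [Category C] (F : C ⥤ C) (c d : ℕ) :
    funcIter F c ⋙ funcIter F d = funcIter F (c + d) := by
  induction d with
  | zero => rfl
  | succ d ih =>
      show (funcIter F c ⋙ funcIter F d) ⋙ F = funcIter F (c + d) ⋙ F
      rw [ih]

/-- Under hypotheses (i)-(iii), for nonzero `f : F^d(M_j) ⟶ M_i` and nonzero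
`g : F^e(M_m) ⟶ M_ℓ` there are `c ≥ 0` and `h : F^c(M_ℓ) ⟶ M_j` with
`f ∘ F^d(h) ∘ F^{d+c}(g) ≠ 0`; i.e. the orbital ring `O(F, M₁ ⊕ ⋯ ⊕ M_r)` is prime. -/
theorem stmt_1 {C : Type*} [Category C] [Preadditive C] [Limits.HasFiniteBiproducts C]
    (F : C ⥤ C) [F.Additive] {r : ℕ} (M : Fin r → C)
    (h1 : ∀ (d : ℕ) (j ℓ : Fin r) (f : (funcIter F d).obj (M j) ⟶ M ℓ), f ≠ 0 → Epi f)
    (h2 : ∀ (d e : ℕ) (j ℓ : Fin r) (g : (funcIter F e).obj (M j) ⟶ M ℓ),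
      Epi g → Epi ((funcIter F d).map g))
    (h3 : ∀ (j ℓ : Fin r), j ≠ ℓ →
      ∃ (c : ℕ) (h : (funcIter F c).obj (M j) ⟶ M ℓ), h ≠ 0) :
    ∀ (d e : ℕ) (i j ℓ m : Fin r)
      (f : (funcIter F d).obj (M j) ⟶ M i)
      (g : (funcIter F e).obj (M m) ⟶ M ℓ),
      f ≠ 0 → g ≠ 0 →
      ∃ (c : ℕ) (h : (funcIter F c).obj (M ℓ) ⟶ M j),
        (funcIter F d).map ((funcIter F c).map g) ≫ (funcIter F d).map h ≫ f ≠ 0 := by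
  intro d e i j ℓ m f g hf hg
  have hge : Epi g := h1 e m ℓ g hg
  by_cases hlj : ℓ = j
  · subst hlj
    refine ⟨0, 𝟙 (M ℓ), ?_⟩
    have hp : Epi ((funcIter F d).map g) := h2 d e m ℓ g hge
    intro hzero
    apply hf
    have hz : (funcIter F d).map g ≫ f = 0 := by
      have e1 := (funcIter F d).map_id (M ℓ)
      erw [e1, Category.id_comp] at hzero
      exact hzero
    exact (cancel_epi ((funcIter F d).map g)).mp (by rw [hz, Limits.comp_zero])
  · obtain ⟨c, h, hne⟩ := h3 ℓ j hlj
    refine ⟨c, h, ?_⟩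
    have key : ∀ (G : C ⥤ C), G = funcIter F (c + d) → Epi (G.map g) := by
      rintro _ rfl
      exact h2 (c + d) e m ℓ g hge
    have hp : Epi ((funcIter F d).map ((funcIter F c).map g)) :=
      key (funcIter F c ⋙ funcIter F d) (funcIter_add F c d)
    have hq : Epi ((funcIter F d).map h) := h2 d c ℓ j h (h1 c ℓ j h hne)
    intro hzero
    apply hf
    have hz1 : (funcIter F d).map h ≫ f = 0 := by
      refine (cancel_epi ((funcIter F d).map ((funcIter F c).map g))).mp ?_
      rw [hzero, Limits.comp_zero]
    exact (cancel_epi ((funcIter F d).map h)).mp (by rw [hz1, Limits.comp_zero])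
end

section
/- Let C be an additive category, F an additive endofunctor of C, and M a nonzero object of C. Assume: (i) for each i ≥ 0, every nonzero morphism F^i(M) → M is an epimorphism; (ii) for all i, j ≥ 0, if g : F^i(M) → M is an epimorphism, then F^j(g) : F^{i+j}(M) → F^j(M) is an epimorphism. Then for all i, j ≥ 0, every nonzero morphism f : F^i(M) → M and every nonzero morphism g : F^j(M) → M, the composite f ∘ F^i(g) : F^{i+j}(M) → M is nonzero. (This is the statement that the orbital ring O(F,M) is a domain.) -/
open CategoryTheory

theorem stmt_2_general {C : Type*} [Category C] [Preadditive C]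
    (F : C ⥤ C) (M : C)
    (h1 : ∀ (i : ℕ) (f : (funcIter F i).obj M ⟶ M), f ≠ 0 → Epi f)
    (h2 : ∀ (i j : ℕ) (g : (funcIter F i).obj M ⟶ M),
      Epi g → Epi ((funcIter F j).map g)) :
    ∀ (i j : ℕ) (f : (funcIter F i).obj M ⟶ M) (g : (funcIter F j).obj M ⟶ M),
      f ≠ 0 → g ≠ 0 → (funcIter F i).map g ≫ f ≠ 0 := by
  intro i j f g hf hg hgf
  have : Epi ((funcIter F i).map g) := h2 j i g (h1 j g hg)
  exact hf (Limits.zero_of_epi_comp _ hgf)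

/-- If every nonzero morphism `F^i(M) ⟶ M` is an epimorphism, and iterates of `F`
preserve these epimorphisms, then the composite `f ∘ F^i(g)` of nonzero morphisms
`f : F^i(M) ⟶ M` and `g : F^j(M) ⟶ M` is nonzero; i.e. the orbital ring `O(F,M)`
is a domain. -/
theorem stmt_2 {C : Type*} [Category C] [Preadditive C] [Limits.HasFiniteBiproducts C]
    (F : C ⥤ C) [F.Additive] (M : C) (hM : ¬ Limits.IsZero M)
    (h1 : ∀ (i : ℕ) (f : (funcIter F i).obj M ⟶ M), f ≠ 0 → Epi f)
    (h2 : ∀ (i j : ℕ) (g : (funcIter F i).obj M ⟶ M),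
      Epi g → Epi ((funcIter F j).map g)) :
    ∀ (i j : ℕ) (f : (funcIter F i).obj M ⟶ M) (g : (funcIter F j).obj M ⟶ M),
      f ≠ 0 → g ≠ 0 → (funcIter F i).map g ≫ f ≠ 0 :=
  stmt_2_general F M h1 h2
end

section
/- Let Λ be a ring, let N be a semisimple Λ-module, let M be a Λ-module, let P be a projective Λ-module, and let p : P → M be a surjective Λ-linear map whose kernel is contained in every maximal submodule of P (i.e., ker p is contained in the radical of P). Then there is an isomorphism of abelian groups Ext¹_Λ(M, N) ≅ Hom_Λ(ker p, N). -/
noncomputable section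

open CategoryTheory Limits Projective

namespace Stmt6Aux

section Cat

variable {C : Type*} [Category C] [Abelian C] [EnoughProjectives C]

/-- generalized `ProjectiveResolution.ofComplex` -/
def myComplex {X₀ X₁ : C} (d : X₁ ⟶ X₀) : ChainComplex C ℕ :=
  ChainComplex.mk' X₀ X₁ d (fun f => ⟨_, Projective.d f, (Category.assoc _ _ _).trans ((congrArg (fun g => Projective.π (kernel f) ≫ g) (kernel.condition f)).trans comp_zero)⟩)

lemma myComplex_d_1_0 {X₀ X₁ : C} (d : X₁ ⟶ X₀) : (myComplex d).d 1 0 = d := by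
  simp [myComplex]

lemma myComplex_exactAt_succ {X₀ X₁ : C} (d : X₁ ⟶ X₀) (n : ℕ) :
    (myComplex d).ExactAt (n + 1) := by
  rw [HomologicalComplex.exactAt_iff' _ (n + 1 + 1) (n + 1) n (by simp) (by simp)]
  let g := (myComplex d).d (n+1) n
  have hg : Projective.d g ≫ g = 0 := (Category.assoc _ _ _).trans ((congrArg (fun h => Projective.π (kernel g) ≫ h) (kernel.condition g)).trans comp_zero)
  have key := ChainComplex.mk'_d X₀ X₁ d (fun f => ⟨_, Projective.d f, (Category.assoc _ _ _).trans ((congrArg (fun h => Projective.π (kernel f) ≫ h) (kernel.condition f)).trans comp_zero)⟩) n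
  let i := ChainComplex.mk'XIso X₀ X₁ d (fun f => ⟨_, Projective.d f, (Category.assoc _ _ _).trans ((congrArg (fun h => Projective.π (kernel f) ≫ h) (kernel.condition f)).trans comp_zero)⟩) n
  have key2 : i.inv ≫ (myComplex d).d (n+2) (n+1) = Projective.d g ≫ 𝟙 _ :=
    (congrArg _ key).trans ((Iso.inv_hom_id_assoc _ _).trans (Category.comp_id _).symm)
  let α : ShortComplex.mk (Projective.d g) g hg ⟶ (myComplex d).sc' (n+1+1) (n+1) n :=
    { τ₁ := i.inv, τ₂ := 𝟙 _, τ₃ := 𝟙 _,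
      comm₁₂ := key2
      comm₂₃ := (Category.id_comp _).trans (Category.comp_id _).symm }
  have : IsIso α.τ₁ := inferInstanceAs (IsIso i.inv)
  have : IsIso α.τ₂ := inferInstanceAs (IsIso (𝟙 ((myComplex d).X (n + 1))))
  have : Mono α.τ₃ := inferInstanceAs (Mono (𝟙 ((myComplex d).X n)))
  rw [← ShortComplex.exact_iff_of_epi_of_isIso_of_mono α]
  apply exact_d_f

instance myComplex_projective {X₀ X₁ : C} (d : X₁ ⟶ X₀) [Projective X₀] [Projective X₁] (n : ℕ) :
    Projective ((myComplex d).X n) := by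
  obtain (_ | _ | n) := n
  · exact ‹Projective X₀›
  · exact ‹Projective X₁›
  · show Projective (ChainComplex.mkAux _ _ _ _ _ _ _ n).X₁
    obtain (_ | n) := n
    · apply Projective.projective_over
    · apply Projective.projective_over

/-- generalized `ProjectiveResolution.of` -/
def myResolution {Z X₀ X₁ : C} (π : X₀ ⟶ Z) (d : X₁ ⟶ X₀)
    [Projective X₀] [Projective X₁] [Epi π] (hdπ : d ≫ π = 0)
    (hex : (ShortComplex.mk d π hdπ).Exact) : ProjectiveResolution Z where
  complex := myComplex d
  π := (ChainComplex.toSingle₀Equiv _ _).symm ⟨π, by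
          rw [myComplex_d_1_0]; exact hdπ⟩
  quasiIso := ⟨fun n => by
    cases n
    · rw [ChainComplex.quasiIsoAt₀_iff, ShortComplex.quasiIso_iff_of_zeros']
      · refine (ShortComplex.exact_and_epi_g_iff_of_iso ?_).2 ⟨hex, ‹Epi π›⟩
        exact ShortComplex.isoMk (Iso.refl _) (Iso.refl _) (Iso.refl _)
          (by simp [myComplex]; exact (Category.id_comp d).trans (Category.comp_id d).symm) (by show 𝟙 X₀ ≫ π = ((ChainComplex.toSingle₀Equiv (myComplex d) Z).symm ⟨π, _⟩).f 0 ≫ 𝟙 Z; simp only [Category.id_comp]; erw [Category.comp_id, ChainComplex.toSingle₀Equiv_symm_apply_f_zero])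
      all_goals rfl
    · rw [quasiIsoAt_iff_exactAt']
      · apply myComplex_exactAt_succ
      · apply ChainComplex.exactAt_succ_single_obj⟩

end Cat

section Mod

variable {Λ M N P : Type} [Ring Λ]
    [AddCommGroup M] [Module Λ M] [AddCommGroup N] [Module Λ N]
    [AddCommGroup P] [Module Λ P]

variable (p : P →ₗ[Λ] M)

def dd : (LinearMap.ker p →₀ Λ) →ₗ[Λ] P :=
  Finsupp.linearCombination Λ (fun k : LinearMap.ker p => (k : P))

lemma range_dd : LinearMap.range (dd p) = LinearMap.ker p := by
  rw [dd, Finsupp.range_linearCombination]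
  rw [show (Set.range fun k : LinearMap.ker p => (k:P)) = (LinearMap.ker p : Set P) from
    Subtype.range_val, Submodule.span_eq]

lemma mem_ker_dd (x : LinearMap.ker p →₀ Λ) : dd p x ∈ LinearMap.ker p := by
  have : dd p x ∈ LinearMap.range (dd p) := LinearMap.mem_range_self _ x
  rwa [range_dd] at this

lemma dd_p : (ModuleCat.ofHom (dd p) :
      ModuleCat.of Λ (LinearMap.ker p →₀ Λ) ⟶ ModuleCat.of Λ P) ≫ ModuleCat.ofHom p = 0 := by
  apply ModuleCat.hom_ext
  apply LinearMap.ext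
  intro x
  exact mem_ker_dd p x

lemma exact_dd_p (h : (ModuleCat.ofHom (dd p)) ≫ ModuleCat.ofHom p = 0) :
    (ShortComplex.mk (ModuleCat.ofHom (dd p)) (ModuleCat.ofHom p) h).Exact := by
  rw [ShortComplex.moduleCat_exact_iff_range_eq_ker]
  exact range_dd p

lemma coatom_avoid (hN : IsSemisimpleModule Λ N) {n : N} (hn : n ≠ 0) :
    ∃ m : Submodule Λ N, IsCoatom m ∧ n ∉ m := by
  have hc : IsCompactElement (Submodule.span Λ {n}) :=
    Submodule.singleton_span_isCompactElement n
  have hcoat : IsCoatomic (Set.Iic (Submodule.span Λ {n})) :=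
    CompleteLattice.Iic_coatomic_of_compact_element hc
  have hne : Submodule.span Λ {n} ≠ ⊥ := by
    simpa [Submodule.span_singleton_eq_bot] using hn
  obtain (htop | ⟨T, hT, -⟩) :=
    hcoat.eq_top_or_exists_le_coatom (⊥ : Set.Iic (Submodule.span Λ {n}))
  · exact absurd (congrArg Subtype.val htop).symm hne
  obtain ⟨W, hW⟩ := exists_isCompl (Submodule.span Λ {n})
  have hTlt : (T : Submodule Λ N) < Submodule.span Λ {n} := by
    have hle2 : (T : Submodule Λ N) ≤ Submodule.span Λ {n} := T.2
    rcases hle2.lt_or_eq with h | h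
    · exact h
    · exact absurd (Subtype.ext h : T = ⊤) hT.1
  have hkey : ((T : Submodule Λ N) ⊔ W) ⊓ Submodule.span Λ {n} = (T : Submodule Λ N) := by
    rw [sup_inf_assoc_of_le W hTlt.le, hW.symm.inf_eq_bot, sup_bot_eq]
  refine ⟨(T : Submodule Λ N) ⊔ W, ⟨?_, ?_⟩, ?_⟩
  · intro htop2
    rw [htop2, top_inf_eq] at hkey
    exact absurd hkey (ne_of_gt hTlt)
  · intro y hy
    have hyT : (T : Submodule Λ N) ≤ y := le_trans le_sup_left (le_of_lt hy)
    have hyW : W ≤ y := le_trans le_sup_right (le_of_lt hy)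
    have hycap : (T : Submodule Λ N) ≤ y ⊓ Submodule.span Λ {n} :=
      le_inf hyT (le_of_lt hTlt)
    rcases hycap.lt_or_eq with hlt | heq
    · have hle : y ⊓ Submodule.span Λ {n} ≤ Submodule.span Λ {n} := inf_le_right
      have h2 := hT.2 ⟨y ⊓ Submodule.span Λ {n}, hle⟩ (Subtype.mk_lt_mk.2 hlt)
      have hspan : y ⊓ Submodule.span Λ {n} = Submodule.span Λ {n} :=
        congrArg Subtype.val h2
      have hsy : Submodule.span Λ {n} ≤ y := hspan ▸ inf_le_left
      exact le_antisymm le_top (by rw [← hW.sup_eq_top]; exact sup_le hsy hyW)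
    · exfalso
      refine absurd ?_ (ne_of_gt hy)
      calc y = y ⊓ (Submodule.span Λ {n} ⊔ W) := by rw [hW.sup_eq_top, inf_top_eq]
      _ = y ⊓ Submodule.span Λ {n} ⊔ W := (inf_sup_assoc_of_le _ hyW).symm
      _ = (T : Submodule Λ N) ⊔ W := by rw [← heq]
  · intro hmem
    have hnspan : n ∈ Submodule.span Λ {n} := Submodule.mem_span_singleton_self n
    have hmem2 : n ∈ ((T : Submodule Λ N) ⊔ W) ⊓ Submodule.span Λ {n} := ⟨hmem, hnspan⟩
    rw [hkey] at hmem2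
    have : Submodule.span Λ {n} ≤ (T : Submodule Λ N) :=
      (Submodule.span_singleton_le_iff_mem _ _).2 hmem2
    exact absurd (lt_of_le_of_lt this hTlt) (lt_irrefl _)

lemma comap_coatom (h : P →ₗ[Λ] N) {m : Submodule Λ N} (hm : IsCoatom m) {x : P}
    (hx : h x ∉ m) : IsCoatom (m.comap h) := by
  have hsimple : IsSimpleModule Λ (N ⧸ m) := isSimpleModule_iff_isCoatom.2 hm
  set h' : P →ₗ[Λ] N ⧸ m := (m.mkQ).comp h with hh'
  have hne : h' ≠ 0 := by
    intro h0
    apply hx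
    have : h' x = 0 := by rw [h0]; rfl
    simpa [hh', Submodule.Quotient.mk_eq_zero] using this
  have hsurj : Function.Surjective h' := LinearMap.surjective_of_ne_zero hne
  have := LinearMap.isCoatom_ker_of_surjective hsurj
  rwa [hh', LinearMap.ker_comp, Submodule.ker_mkQ] at this

lemma vanish_on_ker (hN : IsSemisimpleModule Λ N) (p : P →ₗ[Λ] M)
    (hrad : ∀ Q : Submodule Λ P, IsCoatom Q → LinearMap.ker p ≤ Q)
    (h : P →ₗ[Λ] N) {x : P} (hx : x ∈ LinearMap.ker p) : h x = 0 := by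
  by_contra hne
  obtain ⟨m, hm, hnm⟩ := coatom_avoid hN hne
  have hco : IsCoatom (m.comap h) := comap_coatom h hm hnm
  exact hnm (hrad _ hco hx)

end Mod

end Stmt6Aux

open Stmt6Aux

/-- An isomorphism in `ModuleCat ℤ` gives an `AddEquiv` of the underlying types. -/
def Stmt6Aux.isoAddEquiv {A B : ModuleCat ℤ} (e : A ≅ B) : (A : Type) ≃+ (B : Type) where
  toFun := e.hom
  invFun := e.inv
  left_inv x := by
    change (e.hom ≫ e.inv) x = x
    rw [e.hom_inv_id]; rfl
  right_inv x := by
    change (e.inv ≫ e.hom) x = x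
    rw [e.inv_hom_id]; rfl
  map_add' := map_add e.hom.hom

/-- Let `Λ` be a ring, `N` a semisimple `Λ`-module, `P` a projective `Λ`-module and
`p : P → M` a surjective `Λ`-linear map whose kernel is contained in every maximal
submodule of `P`.  Then `Ext¹_Λ(M,N) ≅ Hom_Λ(ker p, N)` as abelian groups. -/
theorem stmt_6 (Λ M N P : Type) [Ring Λ]
    [AddCommGroup M] [Module Λ M] [AddCommGroup N] [Module Λ N]
    [AddCommGroup P] [Module Λ P]
    (hN : IsSemisimpleModule Λ N) (hP : Module.Projective Λ P)
    (p : P →ₗ[Λ] M) (hsurj : Function.Surjective p)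
    (hrad : ∀ Q : Submodule Λ P, IsCoatom Q → LinearMap.ker p ≤ Q) :
    Nonempty
      ((((Ext ℤ (ModuleCat.{0} Λ) 1).obj
          (Opposite.op (ModuleCat.of Λ M))).obj (ModuleCat.of Λ N)) ≃+
        (LinearMap.ker p →ₗ[Λ] N)) := by
  classical
  let NN := ModuleCat.of Λ N
  let pm : ModuleCat.of Λ P ⟶ ModuleCat.of Λ M := ModuleCat.ofHom p
  let dm : ModuleCat.of Λ (LinearMap.ker p →₀ Λ) ⟶ ModuleCat.of Λ P := ModuleCat.ofHom (dd p)
  haveI : Projective (ModuleCat.of Λ P) := (IsProjective.iff_projective P).1 hP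
  haveI : Projective (ModuleCat.of Λ (LinearMap.ker p →₀ Λ)) :=
    ModuleCat.projective_of_free Finsupp.basisSingleOne
  haveI : Epi pm := (ModuleCat.epi_iff_surjective _).2 hsurj
  let R := myResolution pm dm (dd_p p) (exact_dd_p p _)
  let Y := R.complex.linearYonedaObj ℤ NN
  let S := Y.sc' 0 1 2
  -- the first differential of the Hom complex vanishes
  have hd10 : R.complex.d 1 0 = dm := myComplex_d_1_0 dm
  have hf : S.f = 0 := by
    apply ModuleCat.hom_ext
    apply LinearMap.ext
    intro (h : R.complex.X 0 ⟶ NN)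
    show R.complex.d 1 0 ≫ h = 0
    rw [hd10]
    apply ModuleCat.hom_ext
    apply LinearMap.ext
    intro z
    show h (dd p z) = 0
    exact vanish_on_ker hN p hrad h.hom (mem_ker_dd p z)
  -- isos down to the concrete description
  let e1 : (((Ext ℤ (ModuleCat.{0} Λ) 1).obj
        (Opposite.op (ModuleCat.of Λ M))).obj (ModuleCat.of Λ N)) ≅ Y.homology 1 :=
    R.isoExt 1 NN
  let e2 : Y.homology 1 ≅ S.homology :=
    ShortComplex.homologyMapIso (Y.isoSc' 0 1 2 (by simp) (by simp))
  let e3 : S.homology ≅ S.moduleCatLeftHomologyData.H := S.moduleCatHomologyIso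
  have hbot : LinearMap.range S.moduleCatToCycles = ⊥ := by
    rw [LinearMap.range_eq_bot]
    apply LinearMap.ext
    intro x
    apply Subtype.ext
    show S.f.hom x = 0
    rw [hf]
    rfl
  let e4 : (LinearMap.ker S.g.hom ⧸ LinearMap.range S.moduleCatToCycles) ≃+ LinearMap.ker S.g.hom :=
    (Submodule.quotEquivOfEqBot _ hbot).toAddEquiv
  -- identify ker S.g with Hom(ker p, N)
  let ee : (LinearMap.ker p →₀ Λ) →ₗ[Λ] LinearMap.ker p := Finsupp.linearCombination Λ id
  have hee : Function.Surjective ee := by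
    rw [← LinearMap.range_eq_top, Finsupp.range_linearCombination, Set.range_id,
      Submodule.span_univ]
  have hcomp : dd p = (LinearMap.ker p).subtype ∘ₗ ee := by
    apply Finsupp.lhom_ext
    intro a b
    simp [dd, ee, Finsupp.linearCombination_single]
  have hkk : LinearMap.ker (dd p) = LinearMap.ker ee := by
    rw [hcomp, LinearMap.ker_comp, Submodule.ker_subtype, Submodule.comap_bot]
  -- exactness at degree 1
  have hexact := myComplex_exactAt_succ dm 0
  rw [HomologicalComplex.exactAt_iff' _ 2 1 0 (by simp) (by simp)] at hexact
  have hrange : LinearMap.range (R.complex.d 2 1).hom = LinearMap.ker ee := by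
    have h1 := (ShortComplex.moduleCat_exact_iff_range_eq_ker _).1 hexact
    have h2 : (HomologicalComplex.sc' (myComplex dm) 2 1 0).f = (myComplex dm).d 2 1 := rfl
    have h3 : (HomologicalComplex.sc' (myComplex dm) 2 1 0).g = (myComplex dm).d 1 0 := rfl
    rw [h2, h3] at h1
    show LinearMap.range ((myComplex dm).d 2 1).hom = LinearMap.ker ee
    exact h1.trans ((congrArg (fun φ => LinearMap.ker (ModuleCat.Hom.hom φ)) (myComplex_d_1_0 dm)).trans hkk)
  -- membership criterion for ker S.g
  have hmem : ∀ f : R.complex.X 1 ⟶ NN, (S.g.hom f = 0 ↔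
      ∀ y, y ∈ LinearMap.ker ee → f y = 0) := by
    intro f
    constructor
    · intro h0 y hy
      have hy' : y ∈ LinearMap.range (R.complex.d 2 1).hom := by rw [hrange]; exact hy
      obtain ⟨z, rfl⟩ := hy'
      have : (R.complex.d 2 1 ≫ f) z = 0 := by
        rw [show R.complex.d 2 1 ≫ f = 0 from h0]
        rfl
      exact this
    · intro hv
      show R.complex.d 2 1 ≫ f = 0
      apply ModuleCat.hom_ext
      apply LinearMap.ext
      intro z
      show f (R.complex.d 2 1 z) = 0
      apply hv
      rw [← hrange]
      exact LinearMap.mem_range_self (R.complex.d 2 1).hom z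
  let eqv := ee.quotKerEquivOfSurjective hee
  have heqv : ∀ y, eqv (Submodule.Quotient.mk y) = ee y := by
    intro y
    simp [eqv, LinearMap.quotKerEquivOfSurjective]
  have hsymm : ∀ y, eqv.symm (ee y) = Submodule.Quotient.mk y := by
    intro y
    rw [LinearEquiv.symm_apply_eq, heqv]
  -- the map ker S.g → Hom(ker p, N)
  let coer : LinearMap.ker S.g.hom → ((LinearMap.ker p →₀ Λ) →ₗ[Λ] N) := fun f =>
    (show R.complex.X 1 ⟶ NN from f.val).hom
  have hcond : ∀ f : LinearMap.ker S.g.hom, LinearMap.ker ee ≤ LinearMap.ker (coer f) :=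
    fun f y hy => LinearMap.mem_ker.2 ((hmem f.val).mp (LinearMap.mem_ker.1 f.2) y hy)
  let φ : LinearMap.ker S.g.hom → (LinearMap.ker p →ₗ[Λ] N) := fun f =>
    ((LinearMap.ker ee).liftQ (coer f) (hcond f))
      ∘ₗ (eqv.symm : LinearMap.ker p ≃ₗ[Λ] _).toLinearMap
  have hφ : ∀ (f : LinearMap.ker S.g.hom) (y : LinearMap.ker p →₀ Λ), φ f (ee y) = coer f y := by
    intro f y
    show ((LinearMap.ker ee).liftQ (coer f) (hcond f)) (eqv.symm (ee y)) = _
    rw [hsymm y, Submodule.liftQ_apply]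
  let ψ : (LinearMap.ker p →ₗ[Λ] N) → LinearMap.ker S.g.hom := fun g =>
    ⟨show R.complex.X 1 ⟶ NN from ModuleCat.ofHom (g ∘ₗ ee), LinearMap.mem_ker.2 ((hmem _).mpr (fun y hy => by
        show g (ee y) = 0
        rw [LinearMap.mem_ker.1 hy, map_zero]))⟩
  let e5 : LinearMap.ker S.g.hom ≃+ (LinearMap.ker p →ₗ[Λ] N) :=
    { toFun := φ
      invFun := ψ
      left_inv := fun f => by
        apply Subtype.ext
        apply ModuleCat.hom_ext
        apply LinearMap.ext
        intro z
        show φ f (ee z) = coer f z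
        exact hφ f z
      right_inv := fun g => by
        apply LinearMap.ext
        intro k
        obtain ⟨y, rfl⟩ := hee k
        rw [hφ (ψ g) y]
        rfl
      map_add' := fun f g => by
        apply LinearMap.ext
        intro k
        obtain ⟨y, rfl⟩ := hee k
        show φ (f + g) (ee y) = φ f (ee y) + φ g (ee y)
        rw [hφ, hφ, hφ]
        rfl }
  exact ⟨(isoAddEquiv e1).trans ((isoAddEquiv e2).trans
    ((isoAddEquiv e3).trans (e4.trans e5)))⟩
end
end

section
/- Let Λ be an (internally) ℕ-graded ring whose degree-0 component 𝒜₀ is a semisimple ring. Let M and N be graded right Λ-modules generated in degree 0, and let p_M : P_M → M and p_N : P_N → N be surjective degree-preserving Λ-linear maps from graded projective right Λ-modules P_M, P_N generated in degree 0, restricting to bijections (P_M)₀ → M₀ and (P_N)₀ → N₀. Let f : M → N be an injective degree-preserving Λ-linear map and let g : P_M → P_N be a degree-preserving Λ-linear map with p_N ∘ g = f ∘ p_M. Then g is injective; in particular, the restriction of g to a map ker p_M → ker p_N is injective. -/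
open MulOpposite
open scoped DirectSum
set_option synthInstance.maxHeartbeats 1000000
set_option maxHeartbeats 1600000

theorem aux_vnr {R : Type*} [Ring R] [IsSemisimpleRing R] (a : R) : ∃ x, a * x * a = a := by
  obtain ⟨K, hK⟩ := exists_isCompl (Submodule.span R {a})
  set p := Submodule.span R {a} with hp
  have hmem : a ∈ p := Submodule.mem_span_singleton_self a
  set proj := Submodule.projectionOnto p K hK with hproj
  obtain ⟨x, hx⟩ := Submodule.mem_span_singleton.mp (proj 1).2
  refine ⟨x, ?_⟩
  have ha : (proj a : R) = a := by
    rw [show a = ((⟨a, hmem⟩ : p) : R) from rfl, Submodule.projectionOnto_apply_left hK]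
  have key : (proj a : R) = a * (proj 1 : R) := by
    have h1 : proj a = a • proj 1 := by
      rw [← map_smul]; congr 1; simp [smul_eq_mul]
    rw [h1, Submodule.coe_smul, smul_eq_mul]
  rw [ha, ← hx, smul_eq_mul, ← mul_assoc] at key
  exact key.symm

theorem aux_memE {R : Type*} [Ring R] {e : R} (he : IsIdempotentElem e) (u : Rᵐᵒᵖ) :
    u ∈ Submodule.span Rᵐᵒᵖ {op e} ↔ e * unop u = unop u := by
  rw [Submodule.mem_span_singleton]
  constructor
  · rintro ⟨c, rfl⟩
    show e * unop (c • op e) = unop (c • op e)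
    rw [smul_eq_mul, unop_mul, unop_op, ← mul_assoc, he.eq]
  · intro h
    exact ⟨u, by rw [smul_eq_mul]; apply unop_injective; rw [unop_mul, unop_op, h]⟩

theorem aux_memL {R : Type*} [Ring R] {e : R} (he : IsIdempotentElem e) (z : R) :
    z ∈ Submodule.span R {1 - e} ↔ z * e = 0 := by
  rw [Submodule.mem_span_singleton]
  constructor
  · rintro ⟨c, rfl⟩
    rw [smul_eq_mul, mul_assoc, sub_mul, one_mul, he.eq, sub_self, mul_zero]
  · intro h
    exact ⟨z, by rw [smul_eq_mul, mul_sub, mul_one, h, sub_zero]⟩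

theorem aux_op (R : Type*) [Ring R] [IsSemisimpleRing R] : IsSemisimpleRing Rᵐᵒᵖ := by
  refine { exists_isCompl := ?_ }
  intro I
  let S : Set (Submodule R R) := {J | ∃ e : R, IsIdempotentElem e ∧ J = Submodule.span R {1 - e}
    ∧ Submodule.span Rᵐᵒᵖ {op e} ≤ I}
  have hne : S.Nonempty := by
    refine ⟨Submodule.span R {1 - 0}, 0, IsIdempotentElem.zero, rfl, ?_⟩
    rw [op_zero]
    rw [Submodule.span_singleton_le_iff_mem]
    exact I.zero_mem
  obtain ⟨J, hJS, hmin⟩ := IsArtinian.set_has_minimal S hne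
  obtain ⟨e, he, rfl, heI⟩ := hJS
  have hIe : I = Submodule.span Rᵐᵒᵖ {op e} := by
    refine le_antisymm ?_ heI
    by_contra hlt
    obtain ⟨u, huI, hu⟩ := SetLike.not_le_iff_exists.mp hlt
    set a := unop u with hadef
    set b := a - e * a with hbdef
    have hb : e * b = 0 := by
      rw [hbdef, mul_sub, ← mul_assoc, he.eq, sub_self]
    have hbne : b ≠ 0 := by
      intro h
      apply hu
      rw [aux_memE he]
      rw [hbdef, sub_eq_zero] at h
      exact h.symm
    obtain ⟨y, hy⟩ := aux_vnr b
    set q := b * y with hqdef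
    have hqb : q * b = b := by rw [hqdef, mul_assoc] at hy ⊢; exact hy
    have hqidem : IsIdempotentElem q := by
      show q * q = q
      rw [hqdef, ← mul_assoc, ← hqdef, hqb]
    have heq : e * q = 0 := by rw [hqdef, ← mul_assoc, hb, zero_mul]
    set p := e + q - q * e with hpdef
    clear_value a b q p
    have hpe : p * e = e := by
      rw [hpdef, sub_mul, add_mul, he.eq, mul_assoc, he.eq, add_sub_cancel_right]
    have hpq : p * q = q := by
      rw [hpdef, sub_mul, add_mul, heq, hqidem.eq, mul_assoc, heq, mul_zero, sub_zero, zero_add]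
    have hpidem : IsIdempotentElem p := by
      show p * p = p
      nth_rewrite 2 [hpdef]
      rw [mul_sub, mul_add, hpe, hpq, ← mul_assoc p q e, hpq]
      exact hpdef.symm
    have hpb : p * b = b := by
      rw [hpdef, sub_mul, add_mul, hb, hqb, mul_assoc, hb, mul_zero, sub_zero, zero_add]
    have hopb : op b ∈ I := by
      have h1 : op (e * a) ∈ I := heI ((aux_memE he _).mpr (by rw [unop_op, ← mul_assoc, he.eq]))
      have : op b = u - op (e * a) := by
        apply unop_injective
        rw [unop_op, hbdef, unop_sub, unop_op, hadef]
      rw [this]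
      exact sub_mem huI h1
    have hopq : op q ∈ I := by
      have := I.smul_mem (op y) hopb
      rwa [smul_eq_mul, ← op_mul, ← hqdef] at this
    have hope : op e ∈ I := heI (Submodule.mem_span_singleton_self _)
    have hopp : op p ∈ I := by
      have h2 : op (q * e) ∈ I := by
        have := I.smul_mem (op e) hopq
        rwa [smul_eq_mul, ← op_mul] at this
      have : op p = op e + op q - op (q * e) := by
        apply unop_injective
        rw [unop_op, hpdef, unop_sub, unop_add, unop_op, unop_op, unop_op]
      rw [this]
      exact sub_mem (add_mem hope hopq) h2
    have hspanp : Submodule.span Rᵐᵒᵖ {op p} ≤ I := by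
      rw [Submodule.span_singleton_le_iff_mem]; exact hopp
    have hJle : Submodule.span R {1 - p} ≤ Submodule.span R {1 - e} := by
      intro z hz
      rw [aux_memL hpidem] at hz
      rw [aux_memL he, ← hpe, ← mul_assoc, hz, zero_mul]
    have hJne : Submodule.span R {1 - p} ≠ Submodule.span R {1 - e} := by
      intro hEq
      have h1e : (1 - e) ∈ Submodule.span R {1 - e} :=
        (aux_memL he _).mpr (by rw [sub_mul, one_mul, he.eq, sub_self])
      rw [← hEq, aux_memL hpidem] at h1e
      have hep : e * p = p := by
        rw [sub_mul, one_mul, sub_eq_zero] at h1e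
        exact h1e.symm
      apply hbne
      calc b = p * b := hpb.symm
        _ = (e * p) * b := by rw [hep]
        _ = e * (p * b) := by rw [mul_assoc]
        _ = e * b := by rw [hpb]
        _ = 0 := hb
    exact absurd (lt_of_le_of_ne hJle hJne) (hmin _ ⟨p, hpidem, rfl, hspanp⟩)
  rw [hIe]
  refine ⟨Submodule.span Rᵐᵒᵖ {op (1 - e)}, ?_, ?_⟩
  · rw [disjoint_iff, eq_bot_iff]
    intro u hu
    obtain ⟨h1, h2⟩ := Submodule.mem_inf.mp hu
    rw [aux_memE he] at h1
    rw [aux_memE he.one_sub] at h2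
    rw [Submodule.mem_bot]
    apply unop_injective
    rw [unop_zero]
    calc unop u = e * unop u := h1.symm
      _ = e * ((1 - e) * unop u) := by rw [h2]
      _ = (e * (1 - e)) * unop u := by rw [mul_assoc]
      _ = 0 := by rw [mul_sub, mul_one, he.eq, sub_self, zero_mul]
  · rw [codisjoint_iff, eq_top_iff]
    intro u _
    have hsplit : u = op (e * unop u) + op ((1 - e) * unop u) := by
      apply unop_injective
      rw [unop_add, unop_op, unop_op, ← add_mul, add_sub_cancel, one_mul]
    rw [hsplit]
    refine Submodule.add_mem_sup ?_ ?_
    · exact (aux_memE he _).mpr (by rw [unop_op, ← mul_assoc, he.eq])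
    · exact (aux_memE he.one_sub _).mpr (by rw [unop_op, ← mul_assoc, he.one_sub.eq])

open MulOpposite

section GradedAux

variable {Λ : Type*} [Ring Λ] (𝒜 : ℤ → AddSubgroup Λ) [GradedRing 𝒜]
variable {P : Type*} [AddCommGroup P] [Module Λᵐᵒᵖ P] (𝓟 : ℤ → AddSubgroup P)
  [DirectSum.Decomposition 𝓟]

/-- Degree-zero component as a module over the opposite of the degree-zero subring. -/
def gradeZeroModule
    (h : ∀ (i n : ℤ), ∀ a ∈ 𝒜 i, ∀ m ∈ 𝓟 n, (op a) • m ∈ 𝓟 (n + i)) :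
    Module (↥(𝒜 0))ᵐᵒᵖ ↥(𝓟 0) :=
  letI : SMul (↥(𝒜 0))ᵐᵒᵖ ↥(𝓟 0) :=
    ⟨fun r x => ⟨(op ((unop r : ↥(𝒜 0)) : Λ)) • (x : P), by
      simpa using h 0 0 _ (unop r).2 _ x.2⟩⟩
  { smul := (· • ·)
    one_smul := fun x => by
      apply Subtype.ext
      show (op ((unop (1 : (↥(𝒜 0))ᵐᵒᵖ) : ↥(𝒜 0)) : Λ)) • (x : P) = x
      rw [unop_one]
      norm_cast
      rw [op_one, one_smul]
    mul_smul := fun r s x => by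
      apply Subtype.ext
      show (op ((unop (r * s) : ↥(𝒜 0)) : Λ)) • (x : P)
        = (op ((unop r : ↥(𝒜 0)) : Λ)) • ((op ((unop s : ↥(𝒜 0)) : Λ)) • (x : P))
      rw [unop_mul]
      push_cast
      rw [op_mul, mul_smul]
    smul_zero := fun r => by
      apply Subtype.ext
      show (op ((unop r : ↥(𝒜 0)) : Λ)) • (0 : P) = (0 : P)
      rw [smul_zero]
    smul_add := fun r x y => by
      apply Subtype.ext
      show (op ((unop r : ↥(𝒜 0)) : Λ)) • ((x : P) + (y : P))
        = (op ((unop r : ↥(𝒜 0)) : Λ)) • (x : P) + (op ((unop r : ↥(𝒜 0)) : Λ)) • (y : P)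
      rw [smul_add]
    add_smul := fun r s x => by
      apply Subtype.ext
      show (op ((unop (r + s) : ↥(𝒜 0)) : Λ)) • (x : P)
        = (op ((unop r : ↥(𝒜 0)) : Λ)) • (x : P) + (op ((unop s : ↥(𝒜 0)) : Λ)) • (x : P)
      rw [unop_add]
      push_cast
      rw [op_add, add_smul]
    zero_smul := fun x => by
      apply Subtype.ext
      show (op ((unop (0 : (↥(𝒜 0))ᵐᵒᵖ) : ↥(𝒜 0)) : Λ)) • (x : P) = (0 : P)
      rw [unop_zero]
      norm_cast
      rw [op_zero, zero_smul] }

theorem aux_decompose_smul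
    (h : ∀ (i n : ℤ), ∀ a ∈ 𝒜 i, ∀ m ∈ 𝓟 n, (op a) • m ∈ 𝓟 (n + i))
    {i : ℤ} {a : Λ} (ha : a ∈ 𝒜 i) (x : P) (n : ℤ) :
    (DirectSum.decompose 𝓟 (op a • x) n : P) = op a • (DirectSum.decompose 𝓟 x (n - i) : P) := by
  refine DirectSum.Decomposition.inductionOn 𝓟
    (motive := fun x => ∀ n : ℤ, (DirectSum.decompose 𝓟 (op a • x) n : P)
      = op a • (DirectSum.decompose 𝓟 x (n - i) : P)) ?_ ?_ ?_ x n
  · intro n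
    rw [smul_zero]
    simp
  · intro j m n
    have hmem : op a • (m : P) ∈ 𝓟 (j + i) := h i j a ha _ m.2
    by_cases hn : n = j + i
    · subst hn
      rw [DirectSum.decompose_of_mem_same 𝓟 hmem]
      have : j + i - i = j := by omega
      rw [this, DirectSum.decompose_of_mem_same 𝓟 m.2]
    · rw [DirectSum.decompose_of_mem_ne 𝓟 hmem (fun hh => hn hh.symm)]
      have : (j : ℤ) ≠ n - i := by omega
      rw [DirectSum.decompose_of_mem_ne 𝓟 m.2 this, smul_zero]
  · intro x y hx hy n
    rw [smul_add, DirectSum.decompose_add, DirectSum.add_apply, AddSubgroup.coe_add, hx n, hy n,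
      DirectSum.decompose_add, DirectSum.add_apply, AddSubgroup.coe_add, smul_add]

theorem aux_decompose_neg_zero
    (hneg : ∀ i : ℤ, i < 0 → 𝒜 i = ⊥)
    (h : ∀ (i n : ℤ), ∀ a ∈ 𝒜 i, ∀ m ∈ 𝓟 n, (op a) • m ∈ 𝓟 (n + i))
    (hgen : Submodule.span Λᵐᵒᵖ ((𝓟 0 : Set P)) = ⊤)
    (x : P) : ∀ n : ℤ, n < 0 → (DirectSum.decompose 𝓟 x n : P) = 0 := by
  have hx : x ∈ Submodule.span Λᵐᵒᵖ ((𝓟 0 : Set P)) := by rw [hgen]; trivial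
  refine Submodule.span_induction ?_ ?_ ?_ ?_ hx
  · intro z hz n hn
    exact DirectSum.decompose_of_mem_ne 𝓟 hz (by omega)
  · intro n hn
    simp
  · intro z w hz hw ihz ihw n hn
    rw [DirectSum.decompose_add, DirectSum.add_apply, AddSubgroup.coe_add, ihz n hn, ihw n hn,
      add_zero]
  · intro c z hz ihz
    have key : ∀ b : Λ, ∀ n : ℤ, n < 0 → (DirectSum.decompose 𝓟 (op b • z) n : P) = 0 := by
      refine DirectSum.Decomposition.inductionOn 𝒜
        (motive := fun b => ∀ n : ℤ, n < 0 → (DirectSum.decompose 𝓟 (op b • z) n : P) = 0) ?_ ?_ ?_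
      · intro n hn
        rw [op_zero, zero_smul]
        simp
      · intro i m n hn
        rcases lt_or_ge i 0 with hi | hi
        · obtain ⟨b, hb⟩ := m
          rw [hneg i hi] at hb
          have hb0 : b = 0 := by simpa using hb
          subst hb0
          rw [op_zero, zero_smul]
          simp
        · rw [aux_decompose_smul 𝒜 𝓟 h m.2, ihz (n - i) (by omega), smul_zero]
      · intro b b' hb hb' n hn
        rw [op_add, add_smul, DirectSum.decompose_add, DirectSum.add_apply, AddSubgroup.coe_add,
          hb n hn, hb' n hn, add_zero]
    intro n hn
    have := key (unop c) n hn
    rwa [op_unop] at this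

theorem aux_decompose_map {Q : Type*} [AddCommGroup Q] [Module Λᵐᵒᵖ Q] (𝒬 : ℤ → AddSubgroup Q)
    [DirectSum.Decomposition 𝒬] (g : P →ₗ[Λᵐᵒᵖ] Q)
    (hg : ∀ n : ℤ, ∀ x ∈ 𝓟 n, g x ∈ 𝒬 n) (x : P) (n : ℤ) :
    (DirectSum.decompose 𝒬 (g x) n : Q) = g (DirectSum.decompose 𝓟 x n : P) := by
  refine DirectSum.Decomposition.inductionOn 𝓟
    (motive := fun x => ∀ n : ℤ,
      (DirectSum.decompose 𝒬 (g x) n : Q) = g (DirectSum.decompose 𝓟 x n : P)) ?_ ?_ ?_ x n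
  · intro n
    simp
  · intro j m n
    by_cases hn : n = j
    · subst hn
      rw [DirectSum.decompose_of_mem_same 𝒬 (hg n _ m.2),
        DirectSum.decompose_of_mem_same 𝓟 m.2]
    · rw [DirectSum.decompose_of_mem_ne 𝒬 (hg j _ m.2) (fun hh => hn hh.symm),
        DirectSum.decompose_of_mem_ne 𝓟 m.2 (fun hh => hn hh.symm), map_zero]
  · intro u v hu hv n
    rw [map_add, DirectSum.decompose_add, DirectSum.add_apply, AddSubgroup.coe_add, hu n, hv n,
      DirectSum.decompose_add, DirectSum.add_apply, AddSubgroup.coe_add, map_add]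

end GradedAux

/-- Let `Λ` be an internally ℕ-graded ring with semisimple degree-0 component.  Let `M`,
`N` be graded right `Λ`-modules generated in degree 0, with surjective degree-preserving
maps `pM : PM → M`, `pN : PN → N` from graded projective modules generated in degree 0
restricting to bijections in degree 0.  If `f : M → N` is an injective degree-preserving
`Λ`-linear map and `g : PM → PN` is a degree-preserving lift (`pN ∘ g = f ∘ pM`), then
`g` is injective; in particular `g` restricts to an injective map `ker pM → ker pN`. -/
theorem stmt_8 {Λ : Type*} [Ring Λ] (𝒜 : ℤ → AddSubgroup Λ) [GradedRing 𝒜]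
    (hneg : ∀ i : ℤ, i < 0 → 𝒜 i = ⊥)
    (hss : IsSemisimpleRing (𝒜 0))
    {M N PM PN : Type*}
    [AddCommGroup M] [Module Λᵐᵒᵖ M] (ℳ : ℤ → AddSubgroup M) [DirectSum.Decomposition ℳ]
    (hM : ∀ (i n : ℤ), ∀ a ∈ 𝒜 i, ∀ m ∈ ℳ n, (MulOpposite.op a) • m ∈ ℳ (n + i))
    [AddCommGroup N] [Module Λᵐᵒᵖ N] (𝒩 : ℤ → AddSubgroup N) [DirectSum.Decomposition 𝒩]
    (hN : ∀ (i n : ℤ), ∀ a ∈ 𝒜 i, ∀ m ∈ 𝒩 n, (MulOpposite.op a) • m ∈ 𝒩 (n + i))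
    [AddCommGroup PM] [Module Λᵐᵒᵖ PM] (𝒫M : ℤ → AddSubgroup PM)
    [DirectSum.Decomposition 𝒫M]
    (hPM : ∀ (i n : ℤ), ∀ a ∈ 𝒜 i, ∀ m ∈ 𝒫M n, (MulOpposite.op a) • m ∈ 𝒫M (n + i))
    [AddCommGroup PN] [Module Λᵐᵒᵖ PN] (𝒫N : ℤ → AddSubgroup PN)
    [DirectSum.Decomposition 𝒫N]
    (hPN : ∀ (i n : ℤ), ∀ a ∈ 𝒜 i, ∀ m ∈ 𝒫N n, (MulOpposite.op a) • m ∈ 𝒫N (n + i))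
    (hPMproj : Module.Projective Λᵐᵒᵖ PM) (hPNproj : Module.Projective Λᵐᵒᵖ PN)
    (hMgen : Submodule.span Λᵐᵒᵖ (ℳ 0 : Set M) = ⊤)
    (hNgen : Submodule.span Λᵐᵒᵖ (𝒩 0 : Set N) = ⊤)
    (hPMgen : Submodule.span Λᵐᵒᵖ (𝒫M 0 : Set PM) = ⊤)
    (hPNgen : Submodule.span Λᵐᵒᵖ (𝒫N 0 : Set PN) = ⊤)
    (pM : PM →ₗ[Λᵐᵒᵖ] M) (hpMsurj : Function.Surjective pM)
    (hpMdeg : ∀ n : ℤ, ∀ x ∈ 𝒫M n, pM x ∈ ℳ n)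
    (hpM0 : Set.BijOn pM (𝒫M 0 : Set PM) (ℳ 0 : Set M))
    (pN : PN →ₗ[Λᵐᵒᵖ] N) (hpNsurj : Function.Surjective pN)
    (hpNdeg : ∀ n : ℤ, ∀ x ∈ 𝒫N n, pN x ∈ 𝒩 n)
    (hpN0 : Set.BijOn pN (𝒫N 0 : Set PN) (𝒩 0 : Set N))
    (f : M →ₗ[Λᵐᵒᵖ] N) (hfdeg : ∀ n : ℤ, ∀ x ∈ ℳ n, f x ∈ 𝒩 n)
    (hfinj : Function.Injective f)
    (g : PM →ₗ[Λᵐᵒᵖ] PN)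
    (hgdeg : ∀ n : ℤ, ∀ x ∈ 𝒫M n, g x ∈ 𝒫N n)
    (hg : pN.comp g = f.comp pM) :
    Function.Injective g ∧
      Set.MapsTo g (LinearMap.ker pM : Set PM) (LinearMap.ker pN : Set PN) := by
  classical
  have hgker : Set.MapsTo g (LinearMap.ker pM : Set PM) (LinearMap.ker pN : Set PN) := by
    intro x hx
    have hx' : pM x = 0 := hx
    have hcomm : pN (g x) = f (pM x) := by
      have := LinearMap.congr_fun hg x
      simpa using this
    show pN (g x) = 0
    rw [hcomm, hx', map_zero]
  refine ⟨?_, hgker⟩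
  -- degree-zero injectivity of g
  have hg0inj : ∀ x ∈ 𝒫M 0, ∀ y ∈ 𝒫M 0, g x = g y → x = y := by
    intro x hx y hy hxy
    have e1 : pN (g x) = f (pM x) := by simpa using LinearMap.congr_fun hg x
    have e2 : pN (g y) = f (pM y) := by simpa using LinearMap.congr_fun hg y
    have h1 : f (pM x) = f (pM y) := by rw [← e1, ← e2, hxy]
    exact hpM0.2.1 hx hy (hfinj h1)
  letI : IsSemisimpleRing ↥(𝒜 0) := hss
  letI : IsSemisimpleRing (↥(𝒜 0))ᵐᵒᵖ := aux_op _
  letI instMod : Module (↥(𝒜 0))ᵐᵒᵖ ↥(𝒫N 0) := gradeZeroModule 𝒜 𝒫N hPN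
  let W : Submodule (↥(𝒜 0))ᵐᵒᵖ ↥(𝒫N 0) :=
    { carrier := {y | ∃ x ∈ 𝒫M 0, g x = (y : PN)}
      add_mem' := by
        rintro a b ⟨x1, h1, e1⟩ ⟨x2, h2, e2⟩
        exact ⟨x1 + x2, add_mem h1 h2, by rw [map_add, e1, e2]; rfl⟩
      zero_mem' := ⟨0, zero_mem _, by rw [map_zero]; rfl⟩
      smul_mem' := by
        rintro r y ⟨x, hx, e⟩
        refine ⟨MulOpposite.op ((MulOpposite.unop r : ↥(𝒜 0)) : Λ) • x, ?_, ?_⟩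
        · simpa using hPM 0 0 _ (MulOpposite.unop r).2 _ hx
        · rw [map_smul, e]
          rfl }
  obtain ⟨V, hV⟩ := exists_isCompl W
  let X : Submodule Λᵐᵒᵖ PN := Submodule.span Λᵐᵒᵖ (Subtype.val '' (V : Set ↥(𝒫N 0)))
  let π : PM × X →ₗ[Λᵐᵒᵖ] PN :=
    g.comp (LinearMap.fst Λᵐᵒᵖ PM X) + X.subtype.comp (LinearMap.snd Λᵐᵒᵖ PM X)
  have hπ : ∀ u : PM × X, π u = g u.1 + (u.2 : PN) := fun u => rfl
  have hπsurj : Function.Surjective π := by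
    rw [← LinearMap.range_eq_top, ← top_le_iff, ← hPNgen, Submodule.span_le]
    intro y hy
    have hymem : (⟨y, hy⟩ : ↥(𝒫N 0)) ∈ W ⊔ V := by rw [hV.sup_eq_top]; exact Submodule.mem_top
    obtain ⟨w, hw, v, hv, hwv⟩ := Submodule.mem_sup.mp hymem
    obtain ⟨x, hx, hgx⟩ := hw
    refine ⟨(x, ⟨(v : PN), Submodule.subset_span ⟨v, hv, rfl⟩⟩), ?_⟩
    show g x + ((v : PN)) = y
    rw [hgx]
    have : ((w + v : ↥(𝒫N 0)) : PN) = ((⟨y, hy⟩ : ↥(𝒫N 0)) : PN) := by rw [hwv]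
    simpa using this
  letI := hPNproj
  obtain ⟨σ, hσ⟩ := Module.projective_lifting_property π LinearMap.id hπsurj
  have hσ' : ∀ y : PN, g (σ y).1 + ((σ y).2 : PN) = y := by
    intro y
    have h1 : π (σ y) = y := by
      have := LinearMap.congr_fun hσ y
      simpa using this
    rw [hπ] at h1
    exact h1
  -- degree-zero components of elements of X lie in V
  have hXV : ∀ z ∈ X, (DirectSum.decompose 𝒫N z 0) ∈ V := by
    intro z hz
    refine Submodule.span_induction ?_ ?_ ?_ ?_ hz
    · rintro c ⟨v, hv, rfl⟩
      have hvc : DirectSum.decompose 𝒫N ((v : PN)) 0 = v :=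
        Subtype.ext (DirectSum.decompose_of_mem_same 𝒫N v.2)
      rw [hvc]; exact hv
    · rw [DirectSum.decompose_zero]
      simpa using V.zero_mem
    · intro a b _ _ ha hb
      rw [DirectSum.decompose_add, DirectSum.add_apply]
      exact V.add_mem ha hb
    · intro c z _ hzV
      have key : ∀ b : Λ, DirectSum.decompose 𝒫N (MulOpposite.op b • z) 0 ∈ V := by
        refine DirectSum.Decomposition.inductionOn 𝒜
          (motive := fun b => DirectSum.decompose 𝒫N (MulOpposite.op b • z) 0 ∈ V) ?_ ?_ ?_
        · beta_reduce
          rw [MulOpposite.op_zero, zero_smul, DirectSum.decompose_zero]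
          simpa using V.zero_mem
        · intro i m
          rcases lt_trichotomy i 0 with hi | hi | hi
          · obtain ⟨b, hb⟩ := m
            rw [hneg i hi] at hb
            have hb0 : b = 0 := by simpa using hb
            subst hb0
            rw [MulOpposite.op_zero, zero_smul, DirectSum.decompose_zero]
            simpa using V.zero_mem
          · subst hi
            have hcoe : (DirectSum.decompose 𝒫N (MulOpposite.op (m : Λ) • z) 0 : PN)
                = MulOpposite.op (m : Λ) • (DirectSum.decompose 𝒫N z 0 : PN) := by
              have := aux_decompose_smul 𝒜 𝒫N hPN m.2 z 0
              simpa using this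
            have heq : DirectSum.decompose 𝒫N (MulOpposite.op (m : Λ) • z) 0
                = (MulOpposite.op m) • (DirectSum.decompose 𝒫N z 0) := by
              apply Subtype.ext
              rw [hcoe]
              rfl
            rw [heq]
            exact V.smul_mem _ hzV
          · have hcoe : (DirectSum.decompose 𝒫N (MulOpposite.op (m : Λ) • z) 0 : PN) = 0 := by
              rw [aux_decompose_smul 𝒜 𝒫N hPN m.2 z 0,
                aux_decompose_neg_zero 𝒜 𝒫N hneg hPN hPNgen z (0 - i) (by omega), smul_zero]
            have heq : DirectSum.decompose 𝒫N (MulOpposite.op (m : Λ) • z) 0 = 0 :=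
              Subtype.ext (by rw [hcoe]; rfl)
            rw [heq]
            exact V.zero_mem
        · intro b b' hb hb'
          rw [MulOpposite.op_add, add_smul, DirectSum.decompose_add, DirectSum.add_apply]
          exact V.add_mem hb hb'
      have := key (MulOpposite.unop c)
      rwa [MulOpposite.op_unop] at this
  -- the key degree-zero computation
  have claim1 : ∀ x ∈ 𝒫M 0, (DirectSum.decompose 𝒫M ((σ (g x)).1) 0 : PM) = x := by
    intro x hx
    have hy0 : g x ∈ 𝒫N 0 := hgdeg 0 x hx
    have hpi := hσ' (g x)
    have e0 : (DirectSum.decompose 𝒫N (g ((σ (g x)).1)) 0 : PN)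
        + (DirectSum.decompose 𝒫N (((σ (g x)).2 : PN)) 0 : PN) = g x := by
      have := congrArg (fun u => (DirectSum.decompose 𝒫N u 0 : PN)) hpi
      simpa [DirectSum.decompose_add, DirectSum.add_apply,
        DirectSum.decompose_of_mem_same 𝒫N hy0] using this
    rw [aux_decompose_map 𝒫M 𝒫N g hgdeg] at e0
    set u0 := DirectSum.decompose 𝒫M ((σ (g x)).1) 0 with hu0
    set velt := DirectSum.decompose 𝒫N (((σ (g x)).2 : PN)) 0 with hvelt
    have hveltV : velt ∈ V := hXV _ (σ (g x)).2.2
    have hweltW : (⟨g (u0 : PM), hgdeg 0 _ u0.2⟩ : ↥(𝒫N 0)) ∈ W := ⟨(u0 : PM), u0.2, rfl⟩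
    have hyW : (⟨g x, hy0⟩ : ↥(𝒫N 0)) ∈ W := ⟨x, hx, rfl⟩
    have hsum : (⟨g (u0 : PM), hgdeg 0 _ u0.2⟩ : ↥(𝒫N 0)) + velt = ⟨g x, hy0⟩ :=
      Subtype.ext e0
    have hveltW : velt ∈ W := by
      have : velt = (⟨g x, hy0⟩ : ↥(𝒫N 0)) - ⟨g (u0 : PM), hgdeg 0 _ u0.2⟩ := by
        rw [← hsum]; abel
      rw [this]
      exact W.sub_mem hyW hweltW
    have hvelt0 : velt = 0 := by
      have : velt ∈ W ⊓ V := ⟨hveltW, hveltV⟩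
      have hbot := hV.disjoint.le_bot this
      simpa using hbot
    have : g (u0 : PM) = g x := by
      have := e0
      rw [hvelt0] at this
      simpa using this
    exact hg0inj _ u0.2 _ hx this
  -- assemble the retraction
  let Fc : ∀ i : ℤ, ↥(𝒫N i) →+ PM := fun i =>
    { toFun := fun z => (DirectSum.decompose 𝒫M ((σ (z : PN)).1) i : PM)
      map_zero' := by simp
      map_add' := by
        intro z w
        show (DirectSum.decompose 𝒫M ((σ (((z : PN)) + ((w : PN)))).1) i : PM) = _
        rw [map_add]
        show (DirectSum.decompose 𝒫M ((σ (z : PN)).1 + (σ (w : PN)).1) i : PM) = _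
        rw [DirectSum.decompose_add, DirectSum.add_apply, AddSubgroup.coe_add] }
  set_option synthInstance.maxHeartbeats 1000000 in
  let F : (⨁ i : ℤ, ↥(𝒫N i)) →+ PM := DirectSum.toAddMonoid Fc
  let stilde : PN → PM := fun y => F (DirectSum.decompose 𝒫N y)
  have stilde_homog : ∀ (m : ℤ) (y : PN), y ∈ 𝒫N m →
      stilde y = (DirectSum.decompose 𝒫M ((σ y).1) m : PM) := by
    intro m y hy
    show F (DirectSum.decompose 𝒫N y) = _
    rw [DirectSum.decompose_of_mem _ hy, DirectSum.toAddMonoid_of]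
    rfl
  have stilde_add : ∀ y z : PN, stilde (y + z) = stilde y + stilde z := by
    intro y z
    show F (DirectSum.decompose 𝒫N (y + z)) = _
    rw [DirectSum.decompose_add, map_add]
  have stilde_smul : ∀ (y : PN) (a : Λᵐᵒᵖ), stilde (a • y) = a • stilde y := by
    refine DirectSum.Decomposition.inductionOn 𝒫N
      (motive := fun y => ∀ a : Λᵐᵒᵖ, stilde (a • y) = a • stilde y) ?_ ?_ ?_
    · beta_reduce
      intro a
      rw [smul_zero]
      show stilde 0 = a • stilde 0
      have h0 : stilde 0 = 0 := by
        show F (DirectSum.decompose 𝒫N 0) = 0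
        rw [DirectSum.decompose_zero, map_zero]
      rw [h0, smul_zero]
    · intro m z a
      have key : ∀ b : Λ, stilde (MulOpposite.op b • (z : PN))
          = MulOpposite.op b • stilde (z : PN) := by
        refine DirectSum.Decomposition.inductionOn 𝒜
          (motive := fun b => stilde (MulOpposite.op b • (z : PN))
            = MulOpposite.op b • stilde (z : PN)) ?_ ?_ ?_
        · beta_reduce
          rw [MulOpposite.op_zero, zero_smul, zero_smul]
          show F (DirectSum.decompose 𝒫N 0) = 0
          rw [DirectSum.decompose_zero, map_zero]
        · intro i b
          have hmem : MulOpposite.op (b : Λ) • (z : PN) ∈ 𝒫N (m + i) :=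
            hPN i m _ b.2 _ z.2
          rw [stilde_homog (m + i) _ hmem, stilde_homog m _ z.2]
          have hσs : (σ (MulOpposite.op (b : Λ) • (z : PN))).1
              = MulOpposite.op (b : Λ) • (σ (z : PN)).1 := by
            rw [map_smul]
            rfl
          rw [hσs, aux_decompose_smul 𝒜 𝒫M hPM b.2]
          have harith : m + i - i = m := by omega
          rw [harith]
        · intro b b' hb hb'
          rw [MulOpposite.op_add, add_smul, add_smul, ← hb, ← hb', ← stilde_add]
      have := key (MulOpposite.unop a)
      rwa [MulOpposite.op_unop] at this
    · intro y z hy hz a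
      rw [smul_add, stilde_add, hy a, hz a, stilde_add, smul_add]
  let st : PN →ₗ[Λᵐᵒᵖ] PM :=
    { toFun := stilde
      map_add' := stilde_add
      map_smul' := fun a y => stilde_smul y a }
  have hret : ∀ x : PM, st (g x) = x := by
    have hle : Submodule.span Λᵐᵒᵖ (𝒫M 0 : Set PM) ≤ LinearMap.eqLocus (st.comp g) LinearMap.id := by
      rw [Submodule.span_le]
      intro x hx
      show st (g x) = x
      have := stilde_homog 0 (g x) (hgdeg 0 x hx)
      show stilde (g x) = x
      rw [this]
      exact claim1 x hx
    rw [hPMgen, top_le_iff] at hle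
    intro x
    have : x ∈ LinearMap.eqLocus (st.comp g) LinearMap.id := by rw [hle]; exact Submodule.mem_top
    exact this
  intro u v huv
  have h1 : st (g u) = st (g v) := by rw [huv]
  rwa [hret u, hret v] at h1
end

section
/- Let Λ be an (internally) ℕ-graded ring whose degree-0 component 𝒜₀ is a semisimple ring. Let M and N be graded right Λ-modules generated in degree 0, and let p_M : P_M → M and p_N : P_N → N be surjective degree-preserving Λ-linear maps from graded projective right Λ-modules P_M, P_N generated in degree 0, restricting to bijections (P_M)₀ → M₀ and (P_N)₀ → N₀. Let f : M → N be a surjective degree-preserving Λ-linear map and let g : P_M → P_N be a degree-preserving Λ-linear map with p_N ∘ g = f ∘ p_M (such g exists and is unique). Then the restriction of g to a map ker p_M → ker p_N is surjective if and only if ker f is generated in degree 0, i.e., ker f is generated as a Λ-module by (ker f) ∩ M₀. -/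
open MulOpposite DirectSum

set_option maxHeartbeats 1000000
set_option synthInstance.maxHeartbeats 400000

private theorem aux_comp {A B : Type*} [AddCommGroup A] [AddCommGroup B]
    (ℳ : ℤ → AddSubgroup A) [DirectSum.Decomposition ℳ]
    (𝒩 : ℤ → AddSubgroup B) [DirectSum.Decomposition 𝒩]
    (F : A → B) (hF0 : F 0 = 0) (hFadd : ∀ x y, F (x + y) = F x + F y)
    (hF : ∀ n : ℤ, ∀ x ∈ ℳ n, F x ∈ 𝒩 n) (n : ℤ) (x : A) :
    F (DirectSum.decompose ℳ x n) = DirectSum.decompose 𝒩 (F x) n := by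
  induction x using DirectSum.Decomposition.inductionOn ℳ with
  | zero => simp [hF0]
  | @homogeneous i m =>
    by_cases h : i = n
    · subst h
      rw [DirectSum.decompose_of_mem_same ℳ m.2,
        DirectSum.decompose_of_mem_same 𝒩 (hF i m m.2)]
    · rw [DirectSum.decompose_of_mem_ne ℳ m.2 h,
        DirectSum.decompose_of_mem_ne 𝒩 (hF i m m.2) h, hF0]
  | add a b ha hb =>
    rw [DirectSum.decompose_add, DirectSum.add_apply, AddSubgroup.coe_add, hFadd, ha, hb,
      hFadd, DirectSum.decompose_add, DirectSum.add_apply, AddSubgroup.coe_add]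

private theorem aux_smul {Λ A : Type*} [Ring Λ] [AddCommGroup A] [Module Λᵐᵒᵖ A]
    (ℳ : ℤ → AddSubgroup A) [DirectSum.Decomposition ℳ] {a : Λ} {i : ℤ}
    (ha : ∀ n : ℤ, ∀ m ∈ ℳ n, (MulOpposite.op a) • m ∈ ℳ (n + i))
    (x : A) (n : ℤ) :
    (DirectSum.decompose ℳ ((MulOpposite.op a) • x) (n + i) : A)
      = (MulOpposite.op a) • (DirectSum.decompose ℳ x n : A) := by
  induction x using DirectSum.Decomposition.inductionOn ℳ with
  | zero => simp
  | @homogeneous j m =>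
    by_cases h : j = n
    · subst h
      rw [DirectSum.decompose_of_mem_same ℳ (ha j m m.2),
        DirectSum.decompose_of_mem_same ℳ m.2]
    · rw [DirectSum.decompose_of_mem_ne ℳ (ha j m m.2) (by omega),
        DirectSum.decompose_of_mem_ne ℳ m.2 h, smul_zero]
  | add u v hu hv =>
    rw [smul_add, DirectSum.decompose_add, DirectSum.add_apply, AddSubgroup.coe_add, hu, hv,
      DirectSum.decompose_add, DirectSum.add_apply, AddSubgroup.coe_add, smul_add]



/-- Let `Λ` be an internally ℕ-graded ring with semisimple degree-0 component.  Let `M`,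
`N` be graded right `Λ`-modules generated in degree 0, with surjective degree-preserving
maps `pM : PM → M`, `pN : PN → N` from graded projective modules generated in degree 0
restricting to bijections in degree 0.  If `f : M → N` is a surjective degree-preserving
`Λ`-linear map and `g : PM → PN` is a degree-preserving lift (`pN ∘ g = f ∘ pM`), then
the restriction of `g` to a map `ker pM → ker pN` is surjective if and only if `ker f`
is generated in degree 0, i.e. by `(ker f) ∩ M₀`. -/
theorem stmt_9 {Λ : Type*} [Ring Λ] (𝒜 : ℤ → AddSubgroup Λ) [GradedRing 𝒜]
    (hneg : ∀ i : ℤ, i < 0 → 𝒜 i = ⊥)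
    (hss : IsSemisimpleRing (𝒜 0))
    {M N PM PN : Type*}
    [AddCommGroup M] [Module Λᵐᵒᵖ M] (ℳ : ℤ → AddSubgroup M) [DirectSum.Decomposition ℳ]
    (hM : ∀ (i n : ℤ), ∀ a ∈ 𝒜 i, ∀ m ∈ ℳ n, (MulOpposite.op a) • m ∈ ℳ (n + i))
    [AddCommGroup N] [Module Λᵐᵒᵖ N] (𝒩 : ℤ → AddSubgroup N) [DirectSum.Decomposition 𝒩]
    (hN : ∀ (i n : ℤ), ∀ a ∈ 𝒜 i, ∀ m ∈ 𝒩 n, (MulOpposite.op a) • m ∈ 𝒩 (n + i))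
    [AddCommGroup PM] [Module Λᵐᵒᵖ PM] (𝒫M : ℤ → AddSubgroup PM)
    [DirectSum.Decomposition 𝒫M]
    (hPM : ∀ (i n : ℤ), ∀ a ∈ 𝒜 i, ∀ m ∈ 𝒫M n, (MulOpposite.op a) • m ∈ 𝒫M (n + i))
    [AddCommGroup PN] [Module Λᵐᵒᵖ PN] (𝒫N : ℤ → AddSubgroup PN)
    [DirectSum.Decomposition 𝒫N]
    (hPN : ∀ (i n : ℤ), ∀ a ∈ 𝒜 i, ∀ m ∈ 𝒫N n, (MulOpposite.op a) • m ∈ 𝒫N (n + i))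
    (hPMproj : Module.Projective Λᵐᵒᵖ PM) (hPNproj : Module.Projective Λᵐᵒᵖ PN)
    (hMgen : Submodule.span Λᵐᵒᵖ (ℳ 0 : Set M) = ⊤)
    (hNgen : Submodule.span Λᵐᵒᵖ (𝒩 0 : Set N) = ⊤)
    (hPMgen : Submodule.span Λᵐᵒᵖ (𝒫M 0 : Set PM) = ⊤)
    (hPNgen : Submodule.span Λᵐᵒᵖ (𝒫N 0 : Set PN) = ⊤)
    (pM : PM →ₗ[Λᵐᵒᵖ] M) (hpMsurj : Function.Surjective pM)
    (hpMdeg : ∀ n : ℤ, ∀ x ∈ 𝒫M n, pM x ∈ ℳ n)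
    (hpM0 : Set.BijOn pM (𝒫M 0 : Set PM) (ℳ 0 : Set M))
    (pN : PN →ₗ[Λᵐᵒᵖ] N) (hpNsurj : Function.Surjective pN)
    (hpNdeg : ∀ n : ℤ, ∀ x ∈ 𝒫N n, pN x ∈ 𝒩 n)
    (hpN0 : Set.BijOn pN (𝒫N 0 : Set PN) (𝒩 0 : Set N))
    (f : M →ₗ[Λᵐᵒᵖ] N) (hfdeg : ∀ n : ℤ, ∀ x ∈ ℳ n, f x ∈ 𝒩 n)
    (hfsurj : Function.Surjective f)
    (g : PM →ₗ[Λᵐᵒᵖ] PN)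
    (hgdeg : ∀ n : ℤ, ∀ x ∈ 𝒫M n, g x ∈ 𝒫N n)
    (hg : pN.comp g = f.comp pM) :
    Set.SurjOn g (LinearMap.ker pM : Set PM) (LinearMap.ker pN : Set PN) ↔
      Submodule.span Λᵐᵒᵖ ((LinearMap.ker f : Set M) ∩ (ℳ 0 : Set M)) =
        LinearMap.ker f := by
  classical
  have hgcomm : ∀ x : PM, pN (g x) = f (pM x) := fun x => LinearMap.congr_fun hg x
  -- f is surjective in degree 0
  have hf0 : ∀ y ∈ 𝒩 0, ∃ m ∈ ℳ 0, f m = y := by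
    intro y hy
    obtain ⟨m, rfl⟩ := hfsurj y
    exact ⟨DirectSum.decompose ℳ m 0, SetLike.coe_mem _, by
      rw [aux_comp ℳ 𝒩 f (map_zero f) (map_add f) hfdeg 0 m,
        DirectSum.decompose_of_mem_same 𝒩 hy]⟩
  -- g is surjective in degree 0
  have hg0 : ∀ y ∈ 𝒫N 0, ∃ x ∈ 𝒫M 0, g x = y := by
    intro y hy
    obtain ⟨m, hm0, hm⟩ := hf0 (pN y) (hpNdeg 0 y hy)
    obtain ⟨x, hx0, hx⟩ := hpM0.surjOn hm0
    refine ⟨x, hx0, hpN0.injOn (hgdeg 0 x hx0) hy ?_⟩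
    rw [hgcomm x, hx, hm]
  -- g is surjective
  have hgsurj : Function.Surjective g := by
    rw [← LinearMap.range_eq_top, eq_top_iff, ← hPNgen]
    refine Submodule.span_le.2 fun y hy => ?_
    obtain ⟨x, -, hx⟩ := hg0 y hy
    exact ⟨x, hx⟩
  -- a degree-0-preserving linear section of g
  haveI := hPNproj
  obtain ⟨h, hh⟩ := Module.projective_lifting_property g LinearMap.id hgsurj
  have hh' : ∀ y, g (h y) = y := fun y => LinearMap.congr_fun hh y
  let comp : ∀ n : ℤ, (𝒫N n) →+ PM := fun n =>
    ((((𝒫M n).subtype.comp ((DFinsupp.evalAddMonoidHom n).comp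
        (DirectSum.decomposeAddEquiv 𝒫M).toAddMonoidHom)).comp
      h.toAddMonoidHom).comp (𝒫N n).subtype)
  have hcomp : ∀ (n : ℤ) (y : 𝒫N n), comp n y = (DirectSum.decompose 𝒫M (h y) n : PM) :=
    fun n y => rfl
  let φ : (⨁ n, 𝒫N n) →+ PM := DirectSum.toAddMonoid comp
  let s0 : PN →+ PM := φ.comp (DirectSum.decomposeAddEquiv 𝒫N).toAddMonoidHom
  have hs_hom : ∀ n : ℤ, ∀ y ∈ 𝒫N n, s0 y = (DirectSum.decompose 𝒫M (h y) n : PM) := by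
    intro n y hy
    show φ (DirectSum.decomposeAddEquiv 𝒫N y) = _
    rw [DirectSum.decomposeAddEquiv_apply, DirectSum.decompose_of_mem 𝒫N hy]
    show (DirectSum.toAddMonoid comp) (DirectSum.of _ n ⟨y, hy⟩) = _
    rw [DirectSum.toAddMonoid_of, hcomp]
  have hgs : ∀ y, g (s0 y) = y := by
    intro y
    induction y using DirectSum.Decomposition.inductionOn 𝒫N with
    | zero => simp
    | @homogeneous n m =>
      rw [hs_hom n m m.2,
        aux_comp 𝒫M 𝒫N g (map_zero g) (map_add g) hgdeg n (h m), hh',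
        DirectSum.decompose_of_mem_same 𝒫N m.2]
    | add u v hu hv => rw [map_add, map_add, hu, hv]
  have hs0deg : ∀ y ∈ 𝒫N 0, s0 y ∈ 𝒫M 0 := fun y hy => by
    rw [hs_hom 0 y hy]; exact SetLike.coe_mem _
  have hslin : ∀ (c : Λᵐᵒᵖ) (y : PN), s0 (c • y) = c • s0 y := by
    intro c
    rw [← MulOpposite.op_unop c]
    generalize MulOpposite.unop c = a
    induction a using DirectSum.Decomposition.inductionOn 𝒜 with
    | zero => intro y; rw [MulOpposite.op_zero, zero_smul, zero_smul, map_zero]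
    | @homogeneous i a =>
      intro y
      induction y using DirectSum.Decomposition.inductionOn 𝒫N with
      | zero => rw [smul_zero, map_zero, smul_zero]
      | @homogeneous n m =>
        rw [hs_hom (n + i) _ (hPN i n a a.2 m m.2), hs_hom n m m.2, map_smul,
          aux_smul 𝒫M (fun k w hw => hPM i k a a.2 w hw) (h m) n]
      | add u v hu hv => rw [smul_add, map_add, hu, hv, map_add, smul_add]
    | add a b ha hb =>
      intro y
      rw [MulOpposite.op_add, add_smul, add_smul, map_add, ha, hb]
  let s : PN →ₗ[Λᵐᵒᵖ] PM :=
    { toFun := s0, map_add' := map_add s0, map_smul' := hslin }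
  have hgs' : ∀ y, g (s y) = y := hgs
  -- ker g is generated in degree 0
  have hQ : (LinearMap.ker g : Submodule Λᵐᵒᵖ PM) =
      Submodule.span Λᵐᵒᵖ ((LinearMap.ker g : Set PM) ∩ (𝒫M 0 : Set PM)) := by
    refine le_antisymm ?_ (Submodule.span_le.2 fun x hx => hx.1)
    intro z hz
    have htop : (⊤ : Submodule Λᵐᵒᵖ PM) ≤
        Submodule.span Λᵐᵒᵖ ((LinearMap.ker g : Set PM) ∩ (𝒫M 0 : Set PM)) ⊔
          LinearMap.range s := by
      rw [← hPMgen]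
      refine Submodule.span_le.2 fun x hx => ?_
      have h1 : x - s (g x) ∈ (LinearMap.ker g : Set PM) ∩ (𝒫M 0 : Set PM) := by
        constructor
        · simp only [SetLike.mem_coe, LinearMap.mem_ker, map_sub, hgs' (g x), sub_self]
        · exact sub_mem hx (hs0deg (g x) (hgdeg 0 x hx))
      have h2 : x = (x - s (g x)) + s (g x) := by abel
      rw [h2]
      exact Submodule.add_mem_sup (Submodule.subset_span h1) (LinearMap.mem_range_self s (g x))
    have hztop : z ∈ (⊤ : Submodule Λᵐᵒᵖ PM) := Submodule.mem_top
    obtain ⟨q, hq, r, hr, hqr⟩ := Submodule.mem_sup.1 (htop hztop)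
    obtain ⟨y, rfl⟩ := hr
    have hgq : g q = 0 := by
      have : q ∈ LinearMap.ker g :=
        (Submodule.span_le.2 (fun x hx => hx.1) :
          Submodule.span Λᵐᵒᵖ ((LinearMap.ker g : Set PM) ∩ (𝒫M 0 : Set PM)) ≤
            LinearMap.ker g) hq
      exact this
    have hy0 : y = 0 := by
      have := hz
      rw [LinearMap.mem_ker, ← hqr, map_add g q (s y), hgq, hgs' y, zero_add] at this
      exact this
    rw [← hqr, hy0, map_zero s, add_zero]
    exact hq
  -- degree-0 part of ker f lifts to ker g
  have hker0 : ((LinearMap.ker f : Set M) ∩ (ℳ 0 : Set M)) ⊆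
      pM '' (LinearMap.ker g : Set PM) := by
    rintro m ⟨hmf, hm0⟩
    obtain ⟨x, hx0, hx⟩ := hpM0.surjOn hm0
    have hgx : g x = 0 := by
      refine hpN0.injOn (hgdeg 0 x hx0) (zero_mem _) ?_
      rw [hgcomm x, hx, map_zero pN]
      exact LinearMap.mem_ker.1 hmf
    exact ⟨x, hgx, hx⟩
  constructor
  · -- forward
    intro hsurj
    refine le_antisymm (Submodule.span_le.2 fun m hm => hm.1) fun m hm => ?_
    obtain ⟨x, hx⟩ := hpMsurj m
    have hgx : g x ∈ (LinearMap.ker pN : Set PN) := by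
      simp only [SetLike.mem_coe, LinearMap.mem_ker, hgcomm x, hx]
      exact hm
    obtain ⟨y, hy, hgy⟩ := hsurj hgx
    have hz : x - y ∈ LinearMap.ker g := by
      rw [LinearMap.mem_ker, map_sub, hgy, sub_self]
    have hpz : pM (x - y) = m := by
      rw [map_sub, hx]
      have : pM y = 0 := hy
      rw [this, sub_zero]
    rw [hQ] at hz
    have hmm : m ∈ Submodule.map pM
        (Submodule.span Λᵐᵒᵖ ((LinearMap.ker g : Set PM) ∩ (𝒫M 0 : Set PM))) :=
      ⟨x - y, hz, hpz⟩
    rw [Submodule.map_span] at hmm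
    refine Submodule.span_mono ?_ hmm
    rintro w ⟨u, ⟨hu1, hu2⟩, rfl⟩
    constructor
    · have : g u = 0 := hu1
      simp only [SetLike.mem_coe, LinearMap.mem_ker, ← hgcomm u, this, map_zero]
    · exact hpMdeg 0 u hu2
  · -- backward
    intro hgen y hy
    have hyk : pN y = 0 := hy
    have h1 : pM (s y) ∈ LinearMap.ker f := by
      rw [LinearMap.mem_ker, ← hgcomm (s y), hgs' y, hyk]
    rw [← hgen] at h1
    have h2 : Submodule.span Λᵐᵒᵖ ((LinearMap.ker f : Set M) ∩ (ℳ 0 : Set M)) ≤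
        Submodule.map pM (LinearMap.ker g) := by
      refine Submodule.span_le.2 fun m hm => ?_
      obtain ⟨x, hx1, hx2⟩ := hker0 hm
      exact ⟨x, hx1, hx2⟩
    obtain ⟨z, hz1, hz2⟩ := h2 h1
    refine ⟨s y - z, ?_, ?_⟩
    · show s y - z ∈ LinearMap.ker pM
      rw [LinearMap.mem_ker, map_sub, hz2, sub_self]
    · rw [map_sub, hgs' y]
      have : g z = 0 := hz1
      rw [this, sub_zero]
end

section
/- Let Λ be an (internally) ℕ-graded ring whose degree-0 component 𝒜₀ is a semisimple ring. Let 0 → L → M → N → 0 be a short exact sequence of graded right Λ-modules with degree-preserving maps g : L → M and f : M → N, where L, M, and N are all generated in degree n. Let p_L : P_L → L, p_M : P_M → M, p_N : P_N → N be surjective degree-preserving Λ-linear maps from graded projective right Λ-modules generated in degree n, each restricting to a bijection in degree n, and let ĝ : P_L → P_M and f̂ : P_M → P_N be the (unique) degree-preserving lifts of g and f, i.e., p_M ∘ ĝ = g ∘ p_L and p_N ∘ f̂ = f ∘ p_M. Then ĝ and f̂ restrict to maps on kernels giving a short exact sequence 0 → ker p_L → ker p_M → ker p_N → 0. -/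
set_option synthInstance.maxHeartbeats 1000000
set_option maxHeartbeats 1000000
set_option linter.unusedSectionVars false

namespace Stmt10Aux

open DirectSum MulOpposite

variable {Λ : Type*} [Ring Λ] (𝒜 : ℤ → AddSubgroup Λ) [GradedRing 𝒜]

variable {P : Type*} [AddCommGroup P] [Module Λᵐᵒᵖ P] (𝒞 : ℤ → AddSubgroup P)
  [DirectSum.Decomposition 𝒞]
variable {Q : Type*} [AddCommGroup Q] [Module Λᵐᵒᵖ Q] (𝒬 : ℤ → AddSubgroup Q)
  [DirectSum.Decomposition 𝒬]

/-- Degree-preserving additive maps commute with taking graded components. -/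
theorem comp_decompose (φ : P →+ Q) (hφ : ∀ m : ℤ, ∀ x ∈ 𝒞 m, φ x ∈ 𝒬 m) (x : P) (m : ℤ) :
    ((decompose 𝒬 (φ x)) m : Q) = φ ((decompose 𝒞 x) m : P) := by
  induction x using DirectSum.Decomposition.inductionOn 𝒞 with
  | zero => simp
  | @homogeneous j y =>
    rcases y with ⟨y, hy⟩
    by_cases hjm : j = m
    · subst hjm
      rw [decompose_of_mem_same 𝒞 hy, decompose_of_mem_same 𝒬 (hφ _ _ hy)]
    · rw [decompose_of_mem_ne 𝒞 hy hjm, decompose_of_mem_ne 𝒬 (hφ _ _ hy) hjm, map_zero]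
  | add a b ha hb =>
    simp only [map_add, decompose_add, DirectSum.add_apply, AddSubgroup.coe_add, ha, hb]

/-- Components of a homogeneous scalar action. -/
theorem decompose_op_smul
    (h𝒞 : ∀ (i m : ℤ), ∀ a ∈ 𝒜 i, ∀ x ∈ 𝒞 m, op a • x ∈ 𝒞 (m + i))
    {i : ℤ} {a : Λ} (ha : a ∈ 𝒜 i) (x : P) (m : ℤ) :
    ((decompose 𝒞 (op a • x)) (m + i) : P) = op a • ((decompose 𝒞 x) m : P) := by
  induction x using DirectSum.Decomposition.inductionOn 𝒞 with
  | zero => simp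
  | @homogeneous j y =>
    rcases y with ⟨y, hy⟩
    by_cases hjm : j = m
    · subst hjm
      rw [decompose_of_mem_same 𝒞 hy, decompose_of_mem_same 𝒞 (h𝒞 i j a ha y hy)]
    · rw [decompose_of_mem_ne 𝒞 hy hjm, smul_zero,
        decompose_of_mem_ne 𝒞 (h𝒞 i j a ha y hy) (by omega)]
  | add u v hu hv =>
    simp only [smul_add, decompose_add, DirectSum.add_apply, AddSubgroup.coe_add, hu, hv]

/-- Induction over the graded decomposition of a scalar in `Λᵐᵒᵖ`. -/
theorem op_induction {p : Λᵐᵒᵖ → Prop} (h0 : p 0)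
    (h : ∀ (i : ℤ), ∀ a ∈ 𝒜 i, p (op a))
    (hadd : ∀ r s, p r → p s → p (r + s)) (r : Λᵐᵒᵖ) : p r := by
  have := DirectSum.Decomposition.inductionOn 𝒜 (motive := fun a : Λ => p (op a))
    (by simpa using h0) (fun {i} b => h i b b.2)
    (fun a b ha hb => by show p (op (a + b)); rw [op_add]; exact hadd _ _ ha hb) r.unop
  simpa using this

theorem addhom_smul (s : P →+ Q)
    (hs : ∀ (i : ℤ), ∀ a ∈ 𝒜 i, ∀ x, s (op a • x) = op a • s x)
    (r : Λᵐᵒᵖ) (x : P) : s (r • x) = r • s x := by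
  induction r using op_induction 𝒜 with
  | h0 => simp
  | h i a ha => exact hs i a ha x
  | hadd r r' hr hr' => rw [add_smul, add_smul, map_add, hr, hr']

/-- An additive map commuting with homogeneous scalars is linear. -/
def toLinear (s : P →+ Q)
    (hs : ∀ (i : ℤ), ∀ a ∈ 𝒜 i, ∀ x, s (op a • x) = op a • s x) :
    P →ₗ[Λᵐᵒᵖ] Q where
  toFun := s
  map_add' := s.map_add
  map_smul' := fun r x => addhom_smul 𝒜 s hs r x


/-- A surjective degree-preserving linear map onto a projective graded module admits a
degree-preserving linear section. -/
theorem exists_graded_section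
    (h𝒞 : ∀ (i m : ℤ), ∀ a ∈ 𝒜 i, ∀ x ∈ 𝒞 m, op a • x ∈ 𝒞 (m + i))
    (h𝒬 : ∀ (i m : ℤ), ∀ a ∈ 𝒜 i, ∀ x ∈ 𝒬 m, op a • x ∈ 𝒬 (m + i))
    (φ : P →ₗ[Λᵐᵒᵖ] Q) (hφsurj : Function.Surjective φ)
    (hφdeg : ∀ m : ℤ, ∀ x ∈ 𝒞 m, φ x ∈ 𝒬 m)
    (hQproj : Module.Projective Λᵐᵒᵖ Q) :
    ∃ s : Q →ₗ[Λᵐᵒᵖ] P, (∀ x, φ (s x) = x) ∧ ∀ m : ℤ, ∀ x ∈ 𝒬 m, s x ∈ 𝒞 m := by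
  haveI := hQproj
  obtain ⟨t, ht⟩ := Module.projective_lifting_property φ LinearMap.id hφsurj
  have htx : ∀ x, φ (t x) = x := fun x => congrArg (fun ψ => ψ x) ht
  -- homogenize `t`
  let F : ∀ m : ℤ, 𝒬 m →+ P := fun m =>
    { toFun := fun q => ((decompose 𝒞 (t q)) m : P)
      map_zero' := by simp
      map_add' := by intro a b; push_cast [map_add, decompose_add, DirectSum.add_apply]; rfl }
  let s₀ : Q →+ P :=
    (DirectSum.toAddMonoid F).comp (decomposeAddEquiv 𝒬).toAddMonoidHom
  have hE : ∀ (m : ℤ) (x : Q), x ∈ 𝒬 m → s₀ x = ((decompose 𝒞 (t x)) m : P) := by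
    intro m x hx
    show DirectSum.toAddMonoid F (decompose 𝒬 x) = _
    rw [decompose_of_mem 𝒬 hx, DirectSum.toAddMonoid_of]
    rfl
  have hdeg : ∀ m : ℤ, ∀ x ∈ 𝒬 m, s₀ x ∈ 𝒞 m := by
    intro m x hx
    rw [hE m x hx]
    exact SetLike.coe_mem _
  have hφs : ∀ x, φ (s₀ x) = x := by
    intro x
    induction x using DirectSum.Decomposition.inductionOn 𝒬 with
    | zero => simp
    | @homogeneous j y =>
      rcases y with ⟨y, hy⟩
      have hcd := comp_decompose 𝒞 𝒬 φ.toAddMonoidHom hφdeg (t y) j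
      simp only [LinearMap.toAddMonoidHom_coe] at hcd
      rw [hE j y hy, ← hcd, htx, decompose_of_mem_same 𝒬 hy]
    | add a b ha hb => rw [map_add, map_add, ha, hb]
  have hlin : ∀ (i : ℤ), ∀ a ∈ 𝒜 i, ∀ x, s₀ (op a • x) = op a • s₀ x := by
    intro i a ha x
    induction x using DirectSum.Decomposition.inductionOn 𝒬 with
    | zero => simp
    | @homogeneous j y =>
      rcases y with ⟨y, hy⟩
      rw [hE j y hy, hE (j + i) _ (h𝒬 i j a ha y hy), map_smul,
        decompose_op_smul 𝒜 𝒞 h𝒞 ha (t y) j]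
    | add u v hu hv => rw [smul_add, map_add, map_add, hu, hv, smul_add]
  exact ⟨toLinear 𝒜 s₀ hlin, hφs, hdeg⟩


/-- Components of elements of a module generated in degree `n` lie in
`𝒞 n • 𝒜 (m - n)`. -/
theorem decompose_mem_span_pieces
    (h𝒞 : ∀ (i m : ℤ), ∀ a ∈ 𝒜 i, ∀ x ∈ 𝒞 m, op a • x ∈ 𝒞 (m + i))
    (n : ℤ) (hgen : Submodule.span Λᵐᵒᵖ ((𝒞 n : Set P)) = ⊤) (x : P) :
    ∀ m : ℤ, ((decompose 𝒞 x) m : P) ∈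
      AddSubgroup.closure {w : P | ∃ a ∈ 𝒜 (m - n), ∃ y ∈ 𝒞 n, w = op a • y} := by
  classical
  set S : ℤ → AddSubgroup P := fun m =>
    AddSubgroup.closure {w : P | ∃ a ∈ 𝒜 (m - n), ∃ y ∈ 𝒞 n, w = op a • y} with hS
  have hsmul : ∀ (i : ℤ), ∀ a ∈ 𝒜 i, ∀ (m : ℤ), ∀ z ∈ S (m - i), op a • z ∈ S m := by
    intro i a ha m z hz
    refine AddSubgroup.closure_induction
      (p := fun z _ => op a • z ∈ S m) ?_ ?_ ?_ ?_ hz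
    · rintro w ⟨b, hb, y, hy, rfl⟩
      show op a • (op b • y) ∈ S m
      have hmem : b * a ∈ 𝒜 (m - i - n + i) := SetLike.mul_mem_graded hb ha
      have heq : m - i - n + i = m - n := by ring
      rw [heq] at hmem
      refine AddSubgroup.subset_closure ⟨b * a, hmem, y, hy, ?_⟩
      rw [smul_smul, ← op_mul]
    · show op a • (0 : P) ∈ S m
      rw [smul_zero]; exact zero_mem _
    · intro u v _ _ hu hv
      show op a • (u + v) ∈ S m
      rw [smul_add]; exact add_mem hu hv
    · intro u _ hu
      show op a • (-u) ∈ S m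
      rw [smul_neg]; exact neg_mem hu
  have hx : x ∈ Submodule.span Λᵐᵒᵖ ((𝒞 n : Set P)) := hgen ▸ Submodule.mem_top
  induction hx using Submodule.span_induction with
  | mem y hy =>
    intro m
    by_cases hmn : n = m
    · subst hmn
      rw [decompose_of_mem_same 𝒞 hy]
      refine AddSubgroup.subset_closure ⟨1, by simpa using SetLike.one_mem_graded 𝒜, y, hy, ?_⟩
      rw [op_one, one_smul]
    · rw [decompose_of_mem_ne 𝒞 hy hmn]; exact zero_mem _
  | zero =>
    intro m
    simp only [decompose_zero, DirectSum.zero_apply, ZeroMemClass.coe_zero]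
    exact zero_mem _
  | add u v hu hv ihu ihv =>
    intro m
    simp only [decompose_add, DirectSum.add_apply, AddSubgroup.coe_add]
    exact add_mem (ihu m) (ihv m)
  | smul r z hz ih =>
    induction r using op_induction 𝒜 with
    | h0 =>
      intro m
      simp only [zero_smul, decompose_zero, DirectSum.zero_apply, ZeroMemClass.coe_zero]
      exact zero_mem _
    | h i a ha =>
      intro m
      have h1 : m - i + i = m := by ring
      have h2 := decompose_op_smul 𝒜 𝒞 h𝒞 ha z (m - i)
      rw [h1] at h2
      rw [h2]
      exact hsmul i a ha m _ (ih (m - i))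
    | hadd r r' hr hr' =>
      intro m
      simp only [add_smul, decompose_add, DirectSum.add_apply, AddSubgroup.coe_add]
      exact add_mem (hr m) (hr' m)

/-- Below the generating degree, the graded pieces vanish. -/
theorem piece_eq_zero_of_lt
    (h𝒞 : ∀ (i m : ℤ), ∀ a ∈ 𝒜 i, ∀ x ∈ 𝒞 m, op a • x ∈ 𝒞 (m + i))
    (hneg : ∀ i : ℤ, i < 0 → 𝒜 i = ⊥)
    (n : ℤ) (hgen : Submodule.span Λᵐᵒᵖ ((𝒞 n : Set P)) = ⊤) {m : ℤ} (hm : m < n) :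
    ∀ x ∈ 𝒞 m, x = 0 := by
  intro x hx
  have h1 := decompose_mem_span_pieces 𝒜 𝒞 h𝒞 n hgen x m
  rw [decompose_of_mem_same 𝒞 hx] at h1
  have hsub : {w : P | ∃ a ∈ 𝒜 (m - n), ∃ y ∈ 𝒞 n, w = op a • y} ⊆
      ((⊥ : AddSubgroup P) : Set P) := by
    rintro w ⟨a, ha, y, hy, rfl⟩
    rw [hneg (m - n) (by omega)] at ha
    rw [AddSubgroup.mem_bot.mp ha]
    simp
  have := (AddSubgroup.closure_le ⊥).mpr hsub h1
  simpa using this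


/-- Graded Nakayama: a graded submodule of a module generated in degree `n`, which is a
direct summand and vanishes in degrees `≤ n`, is zero. -/
theorem graded_nakayama
    (h𝒞 : ∀ (i m : ℤ), ∀ a ∈ 𝒜 i, ∀ x ∈ 𝒞 m, op a • x ∈ 𝒞 (m + i))
    (hneg : ∀ i : ℤ, i < 0 → 𝒜 i = ⊥)
    (n : ℤ) (hgen : Submodule.span Λᵐᵒᵖ ((𝒞 n : Set P)) = ⊤)
    (X : Submodule Λᵐᵒᵖ P)
    (hXgr : ∀ x ∈ X, ∀ m : ℤ, ((decompose 𝒞 x) m : P) ∈ X)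
    (hXn : ∀ x ∈ X, x ∈ 𝒞 n → x = 0)
    (D : Submodule Λᵐᵒᵖ P)
    (hdc : ∀ y : P, ∃ u ∈ X, ∃ v ∈ D, y = u + v)
    (hXD : ∀ x ∈ X, x ∈ D → x = 0) :
    ∀ x ∈ X, x = 0 := by
  classical
  set XJ : Submodule Λᵐᵒᵖ P := Submodule.span Λᵐᵒᵖ
    {w : P | ∃ i : ℤ, 0 < i ∧ ∃ a ∈ 𝒜 i, ∃ y ∈ X, w = op a • y} with hXJdef
  set DJ : Submodule Λᵐᵒᵖ P := Submodule.span Λᵐᵒᵖ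
    {w : P | ∃ i : ℤ, 0 < i ∧ ∃ a ∈ 𝒜 i, ∃ y ∈ D, w = op a • y} with hDJdef
  have hXJle : XJ ≤ X := by
    rw [hXJdef]
    apply Submodule.span_le.mpr
    rintro w ⟨i, hi, a, ha, y, hy, rfl⟩
    exact X.smul_mem _ hy
  have hDJle : DJ ≤ D := by
    rw [hDJdef]
    apply Submodule.span_le.mpr
    rintro w ⟨i, hi, a, ha, y, hy, rfl⟩
    exact D.smul_mem _ hy
  -- every element of X lies in XJ ⊔ DJ
  have hXle : ∀ x ∈ X, x ∈ XJ ⊔ DJ := by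
    intro x hx
    have hxsum := DirectSum.sum_support_decompose 𝒞 x
    rw [← hxsum]
    refine Submodule.sum_mem _ ?_
    intro m _
    rcases lt_trichotomy m n with hmn | hmn | hmn
    · rw [show ((decompose 𝒞 x) m : P) = 0 from
        piece_eq_zero_of_lt 𝒜 𝒞 h𝒞 hneg n hgen hmn _ (SetLike.coe_mem _)]
      exact zero_mem _
    · subst hmn
      rw [hXn _ (hXgr x hx m) (SetLike.coe_mem _)]
      exact zero_mem _
    · have h1 := decompose_mem_span_pieces 𝒜 𝒞 h𝒞 n hgen x m
      have hsub : {w : P | ∃ a ∈ 𝒜 (m - n), ∃ y ∈ 𝒞 n, w = op a • y} ⊆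
          ((XJ ⊔ DJ : Submodule Λᵐᵒᵖ P) : Set P) := by
        rintro w ⟨a, ha, y, hy, rfl⟩
        obtain ⟨u, hu, v, hv, rfl⟩ := hdc y
        rw [smul_add]
        refine add_mem ?_ ?_
        · exact Submodule.mem_sup_left
            (Submodule.subset_span ⟨m - n, by omega, a, ha, u, hu, rfl⟩)
        · exact Submodule.mem_sup_right
            (Submodule.subset_span ⟨m - n, by omega, a, ha, v, hv, rfl⟩)
      exact (AddSubgroup.closure_le ((XJ ⊔ DJ).toAddSubgroup)).mpr hsub h1
  -- hence X ≤ XJ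
  have hXXJ : ∀ x ∈ X, x ∈ XJ := by
    intro x hx
    obtain ⟨w1, hw1, w2, hw2, rfl⟩ := Submodule.mem_sup.mp (hXle x hx)
    have hw2X : w2 ∈ X := by
      have : w2 = (w1 + w2) - w1 := by abel
      rw [this]
      exact X.sub_mem hx (hXJle hw1)
    rw [hXD w2 hw2X (hDJle hw2), add_zero]
    exact hw1
  -- components of elements of XJ
  set T : ℤ → AddSubgroup P := fun m => AddSubgroup.closure
    {w : P | ∃ i : ℤ, 0 < i ∧ ∃ a ∈ 𝒜 i, ∃ y, y ∈ X ∧ y ∈ 𝒞 (m - i) ∧ w = op a • y} with hT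
  have hTsmul : ∀ (j : ℤ), ∀ b ∈ 𝒜 j, ∀ (m : ℤ), ∀ z ∈ T (m - j), op b • z ∈ T m := by
    intro j b hb m z hz
    rcases lt_or_ge j 0 with hj | hj
    · rw [hneg j hj] at hb
      rw [AddSubgroup.mem_bot.mp hb]
      simpa using zero_mem (T m)
    · refine AddSubgroup.closure_induction
        (p := fun z _ => op b • z ∈ T m) ?_ ?_ ?_ ?_ hz
      · rintro w ⟨i, hi, a, ha, y, hyX, hy𝒞, rfl⟩
        show op b • (op a • y) ∈ T m
        have hmem : a * b ∈ 𝒜 (i + j) := SetLike.mul_mem_graded ha hb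
        have hy𝒞' : y ∈ 𝒞 (m - (i + j)) := by
          have : m - (i + j) = m - j - i := by ring
          rw [this]; exact hy𝒞
        refine AddSubgroup.subset_closure
          ⟨i + j, by omega, a * b, hmem, y, hyX, hy𝒞', ?_⟩
        rw [smul_smul, ← op_mul]
      · show op b • (0 : P) ∈ T m
        rw [smul_zero]; exact zero_mem _
      · intro u v _ _ hu hv
        show op b • (u + v) ∈ T m
        rw [smul_add]; exact add_mem hu hv
      · intro u _ hu
        show op b • (-u) ∈ T m
        rw [smul_neg]; exact neg_mem hu
  have hXJcomp : ∀ z ∈ XJ, ∀ m : ℤ, ((decompose 𝒞 z) m : P) ∈ T m := by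
    intro z hz
    induction hz using Submodule.span_induction with
    | mem w hw =>
      obtain ⟨i, hi, a, ha, y, hy, rfl⟩ := hw
      intro m
      have h1 : m - i + i = m := by ring
      have h2 := decompose_op_smul 𝒜 𝒞 h𝒞 ha y (m - i)
      rw [h1] at h2
      rw [h2]
      exact AddSubgroup.subset_closure
        ⟨i, hi, a, ha, _, hXgr y hy (m - i), SetLike.coe_mem _, rfl⟩
    | zero =>
      intro m
      simp only [decompose_zero, DirectSum.zero_apply, ZeroMemClass.coe_zero]
      exact zero_mem _
    | add u v hu hv ihu ihv =>
      intro m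
      simp only [decompose_add, DirectSum.add_apply, AddSubgroup.coe_add]
      exact add_mem (ihu m) (ihv m)
    | smul r z hz ih =>
      induction r using op_induction 𝒜 with
      | h0 =>
        intro m
        simp only [zero_smul, decompose_zero, DirectSum.zero_apply, ZeroMemClass.coe_zero]
        exact zero_mem _
      | h j b hbj =>
        intro m
        have h1 : m - j + j = m := by ring
        have h2 := decompose_op_smul 𝒜 𝒞 h𝒞 hbj z (m - j)
        rw [h1] at h2
        rw [h2]
        exact hTsmul j b hbj m _ (ih (m - j))
      | hadd r r' hr hr' =>
        intro m
        simp only [add_smul, decompose_add, DirectSum.add_apply, AddSubgroup.coe_add]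
        exact add_mem (hr m) (hr' m)
  -- bounded-below induction
  have hmain : ∀ k : ℕ, ∀ m : ℤ, m ≤ n + k → ∀ x ∈ X, x ∈ 𝒞 m → x = 0 := by
    intro k
    induction k with
    | zero =>
      intro m hm x hx h𝒞x
      rcases lt_or_eq_of_le hm with hlt | heq
      · exact piece_eq_zero_of_lt 𝒜 𝒞 h𝒞 hneg n hgen (by omega) x h𝒞x
      · exact hXn x hx (by rwa [show m = n by omega] at h𝒞x)
    | succ k ih =>
      intro m hm x hx h𝒞x
      by_cases hm' : m ≤ n + k
      · exact ih m hm' x hx h𝒞x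
      · have hxT : x ∈ T m := by
          have := hXJcomp x (hXXJ x hx) m
          rwa [decompose_of_mem_same 𝒞 h𝒞x] at this
        have hsub : {w : P | ∃ i : ℤ, 0 < i ∧ ∃ a ∈ 𝒜 i, ∃ y, y ∈ X ∧ y ∈ 𝒞 (m - i) ∧
            w = op a • y} ⊆ ((⊥ : AddSubgroup P) : Set P) := by
          rintro w ⟨i, hi, a, ha, y, hyX, hy𝒞, rfl⟩
          rw [ih (m - i) (by omega) y hyX hy𝒞]
          simp
        have := (AddSubgroup.closure_le ⊥).mpr hsub hxT
        simpa using this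
  -- conclude
  intro x hx
  have hcomp0 : ∀ m : ℤ, ((decompose 𝒞 x) m : P) = 0 := by
    intro m
    exact hmain (m - n).toNat m (by omega) _ (hXgr x hx m) (SetLike.coe_mem _)
  have hxsum := DirectSum.sum_support_decompose 𝒞 x
  rw [← hxsum]
  exact Finset.sum_eq_zero fun m _ => hcomp0 m

end Stmt10Aux


/-- Let `Λ` be an internally ℕ-graded ring with semisimple degree-0 component, and let
`0 → L → M → N → 0` be a short exact sequence of graded right `Λ`-modules (all generated
in degree `n`), with degree-preserving maps `g : L → M` and `f : M → N`.  Given surjective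
degree-preserving maps `pL, pM, pN` from graded projective modules generated in degree `n`
restricting to bijections in degree `n`, and degree-preserving lifts `ĝ : PL → PM`,
`f̂ : PM → PN` of `g` and `f`, the maps `ĝ` and `f̂` restrict to the kernels and give a
short exact sequence `0 → ker pL → ker pM → ker pN → 0`. -/
theorem stmt_10 {Λ : Type*} [Ring Λ] (𝒜 : ℤ → AddSubgroup Λ) [GradedRing 𝒜]
    (hneg : ∀ i : ℤ, i < 0 → 𝒜 i = ⊥)
    (hss : IsSemisimpleRing (𝒜 0))
    (n : ℤ)
    {L M N PL PM PN : Type*}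
    [AddCommGroup L] [Module Λᵐᵒᵖ L] (𝓛 : ℤ → AddSubgroup L) [DirectSum.Decomposition 𝓛]
    (hL : ∀ (i m : ℤ), ∀ a ∈ 𝒜 i, ∀ x ∈ 𝓛 m, (MulOpposite.op a) • x ∈ 𝓛 (m + i))
    [AddCommGroup M] [Module Λᵐᵒᵖ M] (ℳ : ℤ → AddSubgroup M) [DirectSum.Decomposition ℳ]
    (hM : ∀ (i m : ℤ), ∀ a ∈ 𝒜 i, ∀ x ∈ ℳ m, (MulOpposite.op a) • x ∈ ℳ (m + i))
    [AddCommGroup N] [Module Λᵐᵒᵖ N] (𝒩 : ℤ → AddSubgroup N) [DirectSum.Decomposition 𝒩]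
    (hN : ∀ (i m : ℤ), ∀ a ∈ 𝒜 i, ∀ x ∈ 𝒩 m, (MulOpposite.op a) • x ∈ 𝒩 (m + i))
    [AddCommGroup PL] [Module Λᵐᵒᵖ PL] (𝒫L : ℤ → AddSubgroup PL)
    [DirectSum.Decomposition 𝒫L]
    (hPL : ∀ (i m : ℤ), ∀ a ∈ 𝒜 i, ∀ x ∈ 𝒫L m, (MulOpposite.op a) • x ∈ 𝒫L (m + i))
    [AddCommGroup PM] [Module Λᵐᵒᵖ PM] (𝒫M : ℤ → AddSubgroup PM)
    [DirectSum.Decomposition 𝒫M]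
    (hPM : ∀ (i m : ℤ), ∀ a ∈ 𝒜 i, ∀ x ∈ 𝒫M m, (MulOpposite.op a) • x ∈ 𝒫M (m + i))
    [AddCommGroup PN] [Module Λᵐᵒᵖ PN] (𝒫N : ℤ → AddSubgroup PN)
    [DirectSum.Decomposition 𝒫N]
    (hPN : ∀ (i m : ℤ), ∀ a ∈ 𝒜 i, ∀ x ∈ 𝒫N m, (MulOpposite.op a) • x ∈ 𝒫N (m + i))
    (hPLproj : Module.Projective Λᵐᵒᵖ PL)
    (hPMproj : Module.Projective Λᵐᵒᵖ PM)
    (hPNproj : Module.Projective Λᵐᵒᵖ PN)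
    (hLgen : Submodule.span Λᵐᵒᵖ (𝓛 n : Set L) = ⊤)
    (hMgen : Submodule.span Λᵐᵒᵖ (ℳ n : Set M) = ⊤)
    (hNgen : Submodule.span Λᵐᵒᵖ (𝒩 n : Set N) = ⊤)
    (hPLgen : Submodule.span Λᵐᵒᵖ (𝒫L n : Set PL) = ⊤)
    (hPMgen : Submodule.span Λᵐᵒᵖ (𝒫M n : Set PM) = ⊤)
    (hPNgen : Submodule.span Λᵐᵒᵖ (𝒫N n : Set PN) = ⊤)
    (g : L →ₗ[Λᵐᵒᵖ] M) (hgdeg : ∀ m : ℤ, ∀ x ∈ 𝓛 m, g x ∈ ℳ m)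
    (f : M →ₗ[Λᵐᵒᵖ] N) (hfdeg : ∀ m : ℤ, ∀ x ∈ ℳ m, f x ∈ 𝒩 m)
    (hginj : Function.Injective g)
    (hexact : LinearMap.ker f = LinearMap.range g)
    (hfsurj : Function.Surjective f)
    (pL : PL →ₗ[Λᵐᵒᵖ] L) (hpLsurj : Function.Surjective pL)
    (hpLdeg : ∀ m : ℤ, ∀ x ∈ 𝒫L m, pL x ∈ 𝓛 m)
    (hpLn : Set.BijOn pL (𝒫L n : Set PL) (𝓛 n : Set L))
    (pM : PM →ₗ[Λᵐᵒᵖ] M) (hpMsurj : Function.Surjective pM)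
    (hpMdeg : ∀ m : ℤ, ∀ x ∈ 𝒫M m, pM x ∈ ℳ m)
    (hpMn : Set.BijOn pM (𝒫M n : Set PM) (ℳ n : Set M))
    (pN : PN →ₗ[Λᵐᵒᵖ] N) (hpNsurj : Function.Surjective pN)
    (hpNdeg : ∀ m : ℤ, ∀ x ∈ 𝒫N m, pN x ∈ 𝒩 m)
    (hpNn : Set.BijOn pN (𝒫N n : Set PN) (𝒩 n : Set N))
    (ghat : PL →ₗ[Λᵐᵒᵖ] PM) (hghatdeg : ∀ m : ℤ, ∀ x ∈ 𝒫L m, ghat x ∈ 𝒫M m)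
    (hghat : pM.comp ghat = g.comp pL)
    (fhat : PM →ₗ[Λᵐᵒᵖ] PN) (hfhatdeg : ∀ m : ℤ, ∀ x ∈ 𝒫M m, fhat x ∈ 𝒫N m)
    (hfhat : pN.comp fhat = f.comp pM) :
    Set.MapsTo ghat (LinearMap.ker pL : Set PL) (LinearMap.ker pM : Set PM) ∧
    Set.MapsTo fhat (LinearMap.ker pM : Set PM) (LinearMap.ker pN : Set PN) ∧
    Set.InjOn ghat (LinearMap.ker pL : Set PL) ∧
    ghat '' (LinearMap.ker pL : Set PL) =
      {x : PM | x ∈ LinearMap.ker pM ∧ fhat x = 0} ∧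
    fhat '' (LinearMap.ker pM : Set PM) = (LinearMap.ker pN : Set PN) := by
  
  classical
  open DirectSum MulOpposite Stmt10Aux in
  · -- commutation of the squares, applied pointwise
    have hg_comm : ∀ x, pM (ghat x) = g (pL x) := fun x => LinearMap.congr_fun hghat x
    have hf_comm : ∀ x, pN (fhat x) = f (pM x) := fun x => LinearMap.congr_fun hfhat x
    -- Step 0: the maps restrict to the kernels
    have hmapsg : Set.MapsTo ghat (LinearMap.ker pL : Set PL) (LinearMap.ker pM : Set PM) := by
      intro x hx
      simp only [SetLike.mem_coe, LinearMap.mem_ker] at hx ⊢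
      rw [hg_comm, hx, map_zero]
    have hmapsf : Set.MapsTo fhat (LinearMap.ker pM : Set PM) (LinearMap.ker pN : Set PN) := by
      intro x hx
      simp only [SetLike.mem_coe, LinearMap.mem_ker] at hx ⊢
      rw [hf_comm, hx, map_zero]
    -- degree-n surjectivity of f
    have hfsurj_n : ∀ y ∈ 𝒩 n, ∃ x ∈ ℳ n, f x = y := by
      intro y hy
      obtain ⟨x', hx'⟩ := hfsurj y
      refine ⟨((decompose ℳ x') n : M), SetLike.coe_mem _, ?_⟩
      have hc := comp_decompose ℳ 𝒩 f.toAddMonoidHom hfdeg x' n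
      simp only [LinearMap.toAddMonoidHom_coe] at hc
      rw [← hc, hx', decompose_of_mem_same 𝒩 hy]
    -- degree-n exactness of (g, f)
    have hker_n : ∀ x ∈ ℳ n, f x = 0 → ∃ l ∈ 𝓛 n, g l = x := by
      intro x hx hfx
      have hxr : x ∈ LinearMap.range g := by rw [← hexact]; exact LinearMap.mem_ker.mpr hfx
      obtain ⟨l', hl'⟩ := hxr
      refine ⟨((decompose 𝓛 l') n : L), SetLike.coe_mem _, ?_⟩
      have hc := comp_decompose 𝓛 ℳ g.toAddMonoidHom hgdeg l' n
      simp only [LinearMap.toAddMonoidHom_coe] at hc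
      rw [← hc, hl', decompose_of_mem_same ℳ hx]
    -- fhat ∘ ghat vanishes in degree n
    have hfg0n : ∀ x ∈ 𝒫L n, fhat (ghat x) = 0 := by
      intro x hx
      have h3 : f (g (pL x)) = 0 := by
        have : g (pL x) ∈ LinearMap.ker f := by rw [hexact]; exact ⟨pL x, rfl⟩
        exact LinearMap.mem_ker.mp this
      have h4 : fhat (ghat x) ∈ 𝒫N n := hfhatdeg n _ (hghatdeg n x hx)
      refine hpNn.2.1 (show fhat (ghat x) ∈ (𝒫N n : Set PN) from h4)
        (show (0 : PN) ∈ (𝒫N n : Set PN) from (𝒫N n).zero_mem) ?_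
      rw [map_zero, hf_comm, hg_comm, h3]
    -- fhat ∘ ghat vanishes everywhere
    have hfg0 : ∀ x : PL, fhat (ghat x) = 0 := by
      intro x
      have hxmem : x ∈ Submodule.span Λᵐᵒᵖ (𝒫L n : Set PL) := by
        rw [hPLgen]; exact Submodule.mem_top
      refine Submodule.span_induction (p := fun x _ => fhat (ghat x) = 0)
        (fun y hy => hfg0n y hy) (by simp) ?_ ?_ hxmem
      · intro u v _ _ hu hv
        rw [map_add, map_add, hu, hv, add_zero]
      · intro r u _ hu
        rw [map_smul, map_smul, hu, smul_zero]
    -- degree-n surjectivity of fhat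
    have hfhat_n : ∀ z ∈ 𝒫N n, ∃ w ∈ 𝒫M n, fhat w = z := by
      intro z hz
      obtain ⟨x, hx, hfx⟩ := hfsurj_n (pN z) (hpNdeg n z hz)
      obtain ⟨w, hw, hwx⟩ := hpMn.2.2 (show x ∈ (ℳ n : Set M) from hx)
      refine ⟨w, hw, ?_⟩
      refine hpNn.2.1 (show fhat w ∈ (𝒫N n : Set PN) from hfhatdeg n w hw)
        (show z ∈ (𝒫N n : Set PN) from hz) ?_
      rw [hf_comm, hwx, hfx]
    -- fhat is surjective
    have hfhatsurj : Function.Surjective fhat := by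
      intro z
      have hrange : Submodule.span Λᵐᵒᵖ (𝒫N n : Set PN) ≤ LinearMap.range fhat := by
        rw [Submodule.span_le]
        intro w hw
        obtain ⟨u, _, hu⟩ := hfhat_n w hw
        exact ⟨u, hu⟩
      have : z ∈ Submodule.span Λᵐᵒᵖ (𝒫N n : Set PN) := by
        rw [hPNgen]; exact Submodule.mem_top
      exact hrange this
    -- degree-n exactness of (ghat, fhat)
    have hF1 : ∀ x ∈ 𝒫M n, fhat x = 0 → ∃ y ∈ 𝒫L n, ghat y = x := by
      intro x hx hfx
      have h1 : f (pM x) = 0 := by rw [← hf_comm, hfx, map_zero]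
      obtain ⟨l, hl, hgl⟩ := hker_n (pM x) (hpMdeg n x hx) h1
      obtain ⟨y, hy, hyl⟩ := hpLn.2.2 (show l ∈ (𝓛 n : Set L) from hl)
      refine ⟨y, hy, ?_⟩
      refine hpMn.2.1 (show ghat y ∈ (𝒫M n : Set PM) from hghatdeg n y hy)
        (show x ∈ (𝒫M n : Set PM) from hx) ?_
      rw [hg_comm, hyl, hgl]
    -- degree-preserving section of fhat
    obtain ⟨σ, hσsec, hσdeg⟩ :=
      exists_graded_section 𝒜 𝒫M 𝒫N hPM hPN fhat hfhatsurj hfhatdeg hPNproj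
    -- ker fhat is generated in degree n
    have hE1 : ∀ x : PM, fhat x = 0 →
        x ∈ Submodule.span Λᵐᵒᵖ {z : PM | fhat z = 0 ∧ z ∈ 𝒫M n} := by
      intro x hx
      set π : PM →ₗ[Λᵐᵒᵖ] PM := (LinearMap.id : PM →ₗ[Λᵐᵒᵖ] PM) - σ.comp fhat with hπ
      have hπx : π x = x := by
        simp [hπ, hx]
      have hxtop : x ∈ Submodule.map π (Submodule.span Λᵐᵒᵖ (𝒫M n : Set PM)) := by
        rw [hPMgen]
        exact ⟨x, Submodule.mem_top, hπx⟩
      rw [Submodule.map_span] at hxtop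
      refine Submodule.span_mono ?_ hxtop
      rintro w ⟨y, hy, rfl⟩
      have hy' : y ∈ 𝒫M n := hy
      constructor
      · show fhat (π y) = 0
        simp [hπ, hσsec]
      · show π y ∈ 𝒫M n
        have h1 : σ (fhat y) ∈ 𝒫M n := hσdeg n _ (hfhatdeg n y hy')
        have : π y = y - σ (fhat y) := by simp [hπ]
        rw [this]
        exact (𝒫M n).sub_mem hy' h1
    -- range ghat ⊇ ker fhat
    have hG : ∀ x : PM, fhat x = 0 → x ∈ LinearMap.range ghat := by
      intro x hx
      refine Submodule.span_le.mpr ?_ (hE1 x hx)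
      rintro z ⟨hz0, hzn⟩
      obtain ⟨y, _, hyz⟩ := hF1 z hzn hz0
      exact ⟨y, hyz⟩
    -- ker fhat is projective
    haveI := hPMproj
    have hKmem : ∀ c : PM, ((LinearMap.id : PM →ₗ[Λᵐᵒᵖ] PM) - σ.comp fhat) c ∈ LinearMap.ker fhat := by
      intro c
      simp [hσsec]
    have hKproj : Module.Projective Λᵐᵒᵖ (LinearMap.ker fhat) := by
      refine Module.Projective.of_split (LinearMap.ker fhat).subtype
        (((LinearMap.id : PM →ₗ[Λᵐᵒᵖ] PM) - σ.comp fhat).codRestrict (LinearMap.ker fhat) hKmem) ?_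
      apply LinearMap.ext
      intro z
      apply Subtype.ext
      have hz : fhat (z : PM) = 0 := z.2
      simp [hz]
    -- ghat corestricted to ker fhat, and a section of it
    have hgmem : ∀ x : PL, ghat x ∈ LinearMap.ker fhat :=
      fun x => LinearMap.mem_ker.mpr (hfg0 x)
    set ghat' : PL →ₗ[Λᵐᵒᵖ] LinearMap.ker fhat :=
      ghat.codRestrict (LinearMap.ker fhat) hgmem with hghat'
    have hghat'surj : Function.Surjective ghat' := by
      rintro ⟨z, hz⟩
      obtain ⟨y, hy⟩ := hG z (LinearMap.mem_ker.mp hz)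
      exact ⟨y, Subtype.ext hy⟩
    haveI := hKproj
    obtain ⟨τ, hτ⟩ := Module.projective_lifting_property ghat' LinearMap.id hghat'surj
    have hτ' : ∀ z : LinearMap.ker fhat, ghat (τ z) = (z : PM) := by
      intro z
      have := LinearMap.congr_fun hτ z
      exact congrArg Subtype.val this
    -- ghat is injective, by graded Nakayama applied to its kernel
    have hXgr : ∀ x ∈ LinearMap.ker ghat, ∀ m : ℤ,
        ((decompose 𝒫L x) m : PL) ∈ LinearMap.ker ghat := by
      intro x hx m
      have hc := comp_decompose 𝒫L 𝒫M ghat.toAddMonoidHom hghatdeg x m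
      simp only [LinearMap.toAddMonoidHom_coe] at hc
      refine LinearMap.mem_ker.mpr ?_
      rw [← hc, LinearMap.mem_ker.mp hx, decompose_zero]
      simp
    have hXn : ∀ x ∈ LinearMap.ker ghat, x ∈ 𝒫L n → x = 0 := by
      intro x hx hxn
      have h1 : g (pL x) = 0 := by rw [← hg_comm, LinearMap.mem_ker.mp hx, map_zero]
      have h2 : pL x = 0 := by
        apply hginj
        rw [h1, map_zero]
      refine hpLn.2.1 (show x ∈ (𝒫L n : Set PL) from hxn)
        (show (0 : PL) ∈ (𝒫L n : Set PL) from (𝒫L n).zero_mem) ?_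
      rw [h2, map_zero]
    have hdc : ∀ y : PL, ∃ u ∈ LinearMap.ker ghat, ∃ v ∈ LinearMap.range τ, y = u + v := by
      intro y
      refine ⟨y - τ (ghat' y), ?_, τ (ghat' y), ⟨ghat' y, rfl⟩, by abel⟩
      refine LinearMap.mem_ker.mpr ?_
      rw [map_sub, hτ' (ghat' y)]
      show ghat y - ghat y = 0
      abel
    have hXD : ∀ x ∈ LinearMap.ker ghat, x ∈ LinearMap.range τ → x = 0 := by
      intro x hx hxD
      obtain ⟨z, rfl⟩ := hxD
      have h1 : (z : PM) = 0 := by rw [← hτ' z, LinearMap.mem_ker.mp hx]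
      have h2 : z = 0 := Subtype.ext h1
      rw [h2, map_zero]
    have hkerg : ∀ x ∈ LinearMap.ker ghat, x = 0 :=
      graded_nakayama 𝒜 𝒫L hPL hneg n hPLgen (LinearMap.ker ghat) hXgr hXn
        (LinearMap.range τ) hdc hXD
    have hginj' : Function.Injective ghat := by
      intro x y hxy
      have : x - y ∈ LinearMap.ker ghat := by
        refine LinearMap.mem_ker.mpr ?_
        rw [map_sub, hxy, sub_self]
      have := hkerg _ this
      have := sub_eq_zero.mp this
      exact this
    -- assemble the five statements
    refine ⟨hmapsg, hmapsf, fun x _ y _ h => hginj' h, ?_, ?_⟩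
    · ext x
      constructor
      · rintro ⟨y, hy, rfl⟩
        have hy' : pL y = 0 := hy
        constructor
        · show ghat y ∈ LinearMap.ker pM
          refine LinearMap.mem_ker.mpr ?_
          rw [hg_comm, hy', map_zero]
        · exact hfg0 y
      · rintro ⟨hker, hf0⟩
        obtain ⟨y, rfl⟩ := hG x hf0
        refine ⟨y, ?_, rfl⟩
        show y ∈ LinearMap.ker pL
        refine LinearMap.mem_ker.mpr ?_
        apply hginj
        rw [← hg_comm, LinearMap.mem_ker.mp hker, map_zero]
    · ext z
      constructor
      · rintro ⟨x, hx, rfl⟩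
        have hx' : pM x = 0 := hx
        show fhat x ∈ LinearMap.ker pN
        refine LinearMap.mem_ker.mpr ?_
        rw [hf_comm, hx', map_zero]
      · intro hz
        have hz' : pN z = 0 := hz
        obtain ⟨x, rfl⟩ := hfhatsurj z
        have h1 : f (pM x) = 0 := by rw [← hf_comm, hz']
        have h2 : pM x ∈ LinearMap.range g := by
          rw [← hexact]; exact LinearMap.mem_ker.mpr h1
        obtain ⟨l, hl⟩ := h2
        obtain ⟨y, hy⟩ := hpLsurj l
        refine ⟨x - ghat y, ?_, ?_⟩
        · show x - ghat y ∈ LinearMap.ker pM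
          refine LinearMap.mem_ker.mpr ?_
          rw [map_sub, hg_comm, hy, hl, sub_self]
        · rw [map_sub, hfg0 y, sub_zero]
end

section
/- Let Λ be an (internally) ℕ-graded ring with components 𝒜₀, 𝒜₁, 𝒜₂ and 𝒜ₙ = 0 for n > 2, such that 𝒜₀ is a semisimple ring and the socle of Λ as a right Λ-module equals 𝒜₂ (i.e., every simple right Λ-submodule of Λ is contained in 𝒜₂, and 𝒜₂ is a sum of simple right Λ-submodules). Let M be a nonzero indecomposable graded right Λ-module with Mₙ = 0 for all n other than 0 and 1. Then exactly one of the following holds: (i) M₁ = 0 and M is a simple Λ-module; (ii) M₀ = 0 and M is a simple Λ-module; (iii) M is generated in degree 0 and the socle of M equals M₁ (every simple Λ-submodule of M is contained in M₁, and M₁ is a sum of simple Λ-submodules). -/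
set_option linter.unusedSectionVars false
set_option linter.unusedVariables false
set_option maxHeartbeats 1000000
open MulOpposite

section RSS

private lemma aux11_mulcorner {R : Type*} [Ring R] {e a : R} (he : e * e = e)
    (ha : a = e * a * e) : e * a = a ∧ a * e = a := by
  constructor
  · conv_lhs => rw [ha]
    calc e * (e * a * e) = ((e * e) * a) * e := by noncomm_ring
      _ = e * a * e := by rw [he]
      _ = a := ha.symm
  · conv_lhs => rw [ha]
    calc (e * a * e) * e = (e * a) * (e * e) := by noncomm_ring
      _ = e * a * e := by rw [he, mul_assoc]
      _ = a := ha.symm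

variable {R : Type*} [Ring R]

private lemma aux11_semiprime [IsSemisimpleRing R] {x : R} (h : ∀ r, x * r * x = 0) : x = 0 := by
  obtain ⟨e, he, hspan⟩ := IsSemisimpleRing.ideal_eq_span_idempotent (Ideal.span {x})
  have hx : x ∈ Ideal.span ({e} : Set R) := hspan ▸ Ideal.subset_span rfl
  have hex : e ∈ Ideal.span ({x} : Set R) := by rw [hspan]; exact Ideal.subset_span rfl
  obtain ⟨r, hr⟩ := Submodule.mem_span_singleton.mp hex
  obtain ⟨s, hs⟩ := Submodule.mem_span_singleton.mp hx
  have he0 : e = 0 := by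
    have : e * e = 0 := by
      rw [← hr]; show (r * x) * (r * x) = 0
      calc (r * x) * (r * x) = r * (x * r * x) := by noncomm_ring
        _ = 0 := by rw [h, mul_zero]
    rw [← he.eq, this]
  rw [← hs, he0]; show s * (0:R) = 0; exact mul_zero s

private lemma aux11_corner [IsSemisimpleRing R] {e : R} (he : IsIdempotentElem e)
    (hatom : IsAtom (Ideal.span {e} : Ideal R)) {a : R} (ha : a = e * a * e) (ha0 : a ≠ 0) :
    ∃ b : R, b = e * b * e ∧ a * b = e ∧ b * a = e := by
  have he0 : e ≠ 0 := by
    rintro rfl; exact hatom.1 (by simp)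
  have key : ∀ a : R, a = e * a * e → a ≠ 0 → ∃ b : R, b = e * b * e ∧ b * a = e := by
    intro a ha ha0
    obtain ⟨hea, hae⟩ := aux11_mulcorner he.eq ha
    have haspan : a ∈ Ideal.span ({e} : Set R) :=
      Submodule.mem_span_singleton.mpr ⟨a, hae⟩
    have hle : Ideal.span ({a} : Set R) ≤ Ideal.span ({e} : Set R) := by
      rw [Ideal.span_le]; rintro y rfl; exact haspan
    have hne : Ideal.span ({a} : Set R) ≠ ⊥ := by
      intro hbot
      have : a ∈ (⊥ : Ideal R) := hbot ▸ Ideal.subset_span rfl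
      exact ha0 (by simpa using this)
    have heq : Ideal.span ({a} : Set R) = Ideal.span ({e} : Set R) := by
      by_contra hne'
      exact hne (hatom.2 _ (lt_of_le_of_ne hle hne'))
    have hmem : e ∈ Ideal.span ({a} : Set R) := heq ▸ Ideal.subset_span rfl
    obtain ⟨r, hr⟩ := Submodule.mem_span_singleton.mp hmem
    have hra : r * a = e := hr
    refine ⟨e * r * e, ?_, ?_⟩
    · rw [show e * (e * r * e) * e = (e * e) * r * (e * e) by noncomm_ring, he.eq]
    · calc (e * r * e) * a = e * (r * (e * a)) := by noncomm_ring
        _ = e * (r * a) := by rw [hea]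
        _ = e * e := by rw [hra]
        _ = e := he.eq
  obtain ⟨b, hb, hba⟩ := key a ha ha0
  have hb0 : b ≠ 0 := by rintro rfl; rw [zero_mul] at hba; exact he0 hba.symm
  obtain ⟨c, hc, hcb⟩ := key b hb hb0
  obtain ⟨hec, hce⟩ := aux11_mulcorner he.eq hc
  obtain ⟨hea, hae⟩ := aux11_mulcorner he.eq ha
  have hac : a = c := by
    calc a = e * a := hea.symm
      _ = (c * b) * a := by rw [hcb]
      _ = c * (b * a) := by rw [mul_assoc]
      _ = c * e := by rw [hba]
      _ = c := hce
  exact ⟨b, hb, by rw [hac, hcb], hba⟩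

private lemma aux11_rightAtom [IsSemisimpleRing R] {e : R} (he : IsIdempotentElem e)
    (hatom : IsAtom (Ideal.span {e} : Ideal R)) :
    IsAtom (Submodule.span Rᵐᵒᵖ {e} : Submodule Rᵐᵒᵖ R) := by
  have he0 : e ≠ 0 := by rintro rfl; exact hatom.1 (by simp)
  constructor
  · intro hbot
    have : e ∈ (⊥ : Submodule Rᵐᵒᵖ R) := hbot ▸ Submodule.mem_span_singleton_self e
    exact he0 (by simpa using this)
  · intro B hB
    by_contra hBbot
    obtain ⟨x, hxB, hx0⟩ := (Submodule.ne_bot_iff B).mp hBbot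
    have hxs : x ∈ Submodule.span Rᵐᵒᵖ ({e} : Set R) := hB.le hxB
    obtain ⟨r, hr⟩ := Submodule.mem_span_singleton.mp hxs
    have hxer : e * r.unop = x := hr
    have hex : e * x = x := by rw [← hxer, ← mul_assoc, he.eq]
    obtain ⟨s, hs⟩ : ∃ s : R, x * s * x ≠ 0 := by
      by_contra hall
      push_neg at hall
      exact hx0 (aux11_semiprime hall)
    set u : R := x * s * e with hu
    have hucorner : u = e * u * e := by
      rw [hu]
      calc x * s * e = (e * x) * s * e := by rw [hex]
        _ = e * (x * s * e) * e := by
            rw [show e * (x * s * e) * e = (e * x) * s * (e * e) by noncomm_ring, he.eq]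
    have hu0 : u ≠ 0 := by
      intro h0
      apply hs
      calc x * s * x = (x * s) * (e * r.unop) := by rw [hxer]
        _ = (x * s * e) * r.unop := by noncomm_ring
        _ = 0 := by rw [← hu, h0, zero_mul]
    obtain ⟨b, hb, hub, hbu⟩ := aux11_corner he hatom hucorner hu0
    have heB : e ∈ B := by
      have : e = x * (s * e * b) := by
        conv_lhs => rw [← hub, hu]
        noncomm_ring
      rw [this]
      exact B.smul_mem (op (s * e * b)) hxB
    have : Submodule.span Rᵐᵒᵖ ({e} : Set R) ≤ B := by
      rw [Submodule.span_le]; rintro y rfl; exact heB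
    exact (lt_irrefl B) (lt_of_lt_of_le hB this)

private lemma aux11_rss [IsSemisimpleRing R] : IsSemisimpleRing Rᵐᵒᵖ := by
  classical
  set T : Submodule Rᵐᵒᵖ R := sSup {S : Submodule Rᵐᵒᵖ R | IsSimpleModule Rᵐᵒᵖ S} with hTdef
  have hT : ∀ (a : R), ∀ x ∈ T, a * x ∈ T := by
    intro a x hx
    let la : R →ₗ[Rᵐᵒᵖ] R :=
      { toFun := fun y => a * y
        map_add' := mul_add a
        map_smul' := fun c y => by
          simp only [MulOpposite.smul_eq_mul_unop, RingHom.id_apply, mul_assoc] }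
    have hmap : Submodule.map la T ≤ T := by
      rw [hTdef, (Submodule.gc_map_comap la).l_sSup]
      refine iSup₂_le fun S hS => ?_
      haveI : IsSimpleModule Rᵐᵒᵖ S := hS
      have hrange : LinearMap.range (la.comp S.subtype) = Submodule.map la S := by
        rw [LinearMap.range_comp, Submodule.range_subtype]
      rcases eq_bot_or_eq_top (LinearMap.ker (la.comp S.subtype)) with hker | hker
      · have hinj := LinearMap.ker_eq_bot.mp hker
        haveI : IsSimpleModule Rᵐᵒᵖ (LinearMap.range (la.comp S.subtype)) :=
          IsSimpleModule.congr (LinearEquiv.ofInjective _ hinj).symm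
        rw [← hrange]
        exact le_sSup this
      · have : la.comp S.subtype = 0 := LinearMap.ker_eq_top.mp hker
        rw [← hrange, this, LinearMap.range_zero]
        exact bot_le
    exact hmap ⟨x, hx, rfl⟩
  have h1 : (1 : R) ∈ T := by
    let T' : Ideal R :=
      { carrier := (T : Set R)
        add_mem' := fun hx hy => T.add_mem hx hy
        zero_mem' := T.zero_mem
        smul_mem' := fun c x hx => hT c x hx }
    have hsimple : ∀ L : Submodule R R, IsSimpleModule R L → L ≤ T' := by
      intro L hL
      obtain ⟨e, he, rfl⟩ := IsSemisimpleRing.ideal_eq_span_idempotent L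
      have hatom := isSimpleModule_iff_isAtom.mp hL
      have hra := aux11_rightAtom he hatom
      have heT : e ∈ T := by
        rw [hTdef]
        have hmem : (Submodule.span Rᵐᵒᵖ {e} : Submodule Rᵐᵒᵖ R) ∈
            {S : Submodule Rᵐᵒᵖ R | IsSimpleModule Rᵐᵒᵖ S} :=
          isSimpleModule_iff_isAtom.mpr hra
        exact le_sSup hmem (Submodule.mem_span_singleton_self e)
      have heT' : e ∈ T' := heT
      rw [Ideal.span_le]
      rintro y rfl
      exact heT'
    have htop : sSup {m : Submodule R R | IsSimpleModule R m} = ⊤ :=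
      IsSemisimpleModule.sSup_simples_eq_top R R
    have hle : (⊤ : Ideal R) ≤ T' := by
      rw [← htop]
      exact sSup_le fun L hL => hsimple L hL
    exact hle trivial
  have hTtop : T = ⊤ := by
    rw [eq_top_iff]
    intro x _
    have := T.smul_mem (op x) h1
    simpa using this
  haveI hssR : IsSemisimpleModule Rᵐᵒᵖ R := IsSemisimpleModule.of_sSup_simples_eq_top hTtop
  let eop : Rᵐᵒᵖ ≃ₗ[Rᵐᵒᵖ] R :=
    { toFun := unop
      invFun := op
      left_inv := fun _ => rfl
      right_inv := fun _ => rfl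
      map_add' := fun _ _ => rfl
      map_smul' := fun c m => rfl }
  exact IsSemisimpleModule.congr eop

end RSS

section GEN
variable {R : Type*} [Ring R] {M : Type*} [AddCommGroup M] [Module R M]

private lemma aux11_map_atom {X : Submodule R M} {p : Submodule R X} (hp : IsAtom p) :
    IsAtom (Submodule.map X.subtype p) := by
  constructor
  · intro hbot
    obtain ⟨x, hxp, hx0⟩ := (Submodule.ne_bot_iff p).mp hp.1
    have : (x : M) ∈ Submodule.map X.subtype p := ⟨x, hxp, rfl⟩
    rw [hbot] at this
    simp only [Submodule.mem_bot] at this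
    exact hx0 (Subtype.ext this)
  · intro B hB
    have hBX : B ≤ X := le_trans hB.le (Submodule.map_subtype_le X p)
    have hmapcomap : Submodule.map X.subtype (Submodule.comap X.subtype B) = B := by
      rw [Submodule.map_comap_subtype, inf_eq_right.mpr hBX]
    have hle : Submodule.comap X.subtype B ≤ p := by
      intro y hy
      have : (y : M) ∈ Submodule.map X.subtype p := hB.le hy
      obtain ⟨z, hz, hzy⟩ := this
      have : z = y := Subtype.ext hzy
      rwa [← this]
    have hne : Submodule.comap X.subtype B ≠ p := by
      intro h
      rw [← hmapcomap, h] at hB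
      exact lt_irrefl _ hB
    have := hp.2 _ (lt_of_le_of_ne hle hne)
    rw [← hmapcomap, this, Submodule.map_bot]

private lemma aux11_compl [IsSemisimpleRing R] {X Y : Submodule R M} (h : Y ≤ X) :
    ∃ Z : Submodule R M, Z ≤ X ∧ Y ⊓ Z = ⊥ ∧ Y ⊔ Z = X := by
  obtain ⟨Z', hZ'⟩ := exists_isCompl (Submodule.comap X.subtype Y)
  refine ⟨Submodule.map X.subtype Z', Submodule.map_subtype_le X Z', ?_, ?_⟩
  · rw [eq_bot_iff]
    intro x hx
    obtain ⟨hxY, z, hz, hzx⟩ := hx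
    have hxX : x ∈ X := h hxY
    have : z ∈ Submodule.comap X.subtype Y := by
      simp only [Submodule.mem_comap, Submodule.coe_subtype, hzx]; exact hxY
    have : z ∈ Submodule.comap X.subtype Y ⊓ Z' := ⟨this, hz⟩
    rw [hZ'.inf_eq_bot] at this
    simp only [Submodule.mem_bot] at this
    rw [← hzx, this]
    simp
  · apply le_antisymm
    · exact sup_le h (Submodule.map_subtype_le X Z')
    · intro x hxX
      have : (⟨x, hxX⟩ : X) ∈ Submodule.comap X.subtype Y ⊔ Z' := by
        rw [hZ'.sup_eq_top]; trivial
      obtain ⟨u, hu, v, hv, huv⟩ := Submodule.mem_sup.mp this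
      apply Submodule.mem_sup.mpr
      refine ⟨(u : M), hu, (v : M), ⟨v, hv, rfl⟩, ?_⟩
      have := congrArg (X.subtype : X →ₗ[R] M) huv
      simpa using this

private lemma aux11_atoms [IsSemisimpleRing R] (X : Submodule R M) :
    X ≤ sSup {S : Submodule R M | S ≤ X ∧ IsAtom S} := by
  have htop : sSup {p : Submodule R X | IsSimpleModule R p} = ⊤ :=
    IsSemisimpleModule.sSup_simples_eq_top R X
  have hX : X = Submodule.map X.subtype ⊤ := by
    rw [Submodule.map_top, Submodule.range_subtype]
  calc X = Submodule.map X.subtype ⊤ := hX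
    _ = Submodule.map X.subtype (sSup {p : Submodule R X | IsSimpleModule R p}) := by rw [htop]
    _ = ⨆ p ∈ {p : Submodule R X | IsSimpleModule R p}, Submodule.map X.subtype p :=
        (Submodule.gc_map_comap X.subtype).l_sSup
    _ ≤ sSup {S : Submodule R M | S ≤ X ∧ IsAtom S} := by
        refine iSup₂_le fun p hp => ?_
        have hatom : IsAtom (Submodule.map X.subtype p) :=
          aux11_map_atom (isSimpleModule_iff_isAtom.mp hp)
        exact le_sSup ⟨Submodule.map_subtype_le X p, hatom⟩

end GEN

section GRADED
variable {Λ : Type*} [Ring Λ] (𝒜 : ℤ → AddSubgroup Λ) [GradedRing 𝒜]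
  {M : Type*} [AddCommGroup M] [Module Λᵐᵒᵖ M]
  (ℳ : ℤ → AddSubgroup M) [DirectSum.Decomposition ℳ]

/-- inclusion of degree-0 part -/
private def aux11_j : (𝒜 0) →+* Λ where
  toFun := fun a => (a : Λ)
  map_one' := rfl
  map_mul' := fun _ _ => rfl
  map_zero' := rfl
  map_add' := fun _ _ => rfl

/-- right `𝒜 0`-module structure on a right `Λ`-module -/
private def aux11_rmod : Module (𝒜 0)ᵐᵒᵖ M := Module.compHom M (RingHom.op (aux11_j 𝒜))

section Hyps
variable (hconc : ∀ n : ℤ, n ≠ 0 → n ≠ 1 → n ≠ 2 → 𝒜 n = ⊥)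
  (hMconc : ∀ n : ℤ, n ≠ 0 → n ≠ 1 → ℳ n = ⊥)
  (hM : ∀ (i n : ℤ), ∀ a ∈ 𝒜 i, ∀ m ∈ ℳ n, (MulOpposite.op a) • m ∈ ℳ (n + i))

include hMconc hM in
private lemma aux11_kill2 : ∀ a ∈ 𝒜 2, ∀ m : M, (op a) • m = 0 := by
  intro a ha m
  induction m using DirectSum.Decomposition.inductionOn ℳ with
  | zero => simp
  | @homogeneous i x =>
      by_cases hi : i = 0 ∨ i = 1
      · have hmem := hM 2 i a ha (x : M) x.2
        have : ℳ (i + 2) = ⊥ := by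
          rcases hi with rfl | rfl
          · exact hMconc 2 (by norm_num) (by norm_num)
          · exact hMconc 3 (by norm_num) (by norm_num)
        rw [this] at hmem
        simpa using hmem
      · push_neg at hi
        have hx : (x : M) = 0 := by
          rw [← AddSubgroup.mem_bot, ← hMconc i hi.1 hi.2]
          exact x.2
        rw [hx, smul_zero]
  | add m m' hm hm' => rw [smul_add, hm, hm', add_zero]

include hMconc in
private lemma aux11_dec : ∀ m : M, ∃ x ∈ ℳ 0, ∃ y ∈ ℳ 1, m = x + y := by
  intro m
  induction m using DirectSum.Decomposition.inductionOn ℳ with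
  | zero => exact ⟨0, (ℳ 0).zero_mem, 0, (ℳ 1).zero_mem, by simp⟩
  | @homogeneous i x =>
      by_cases h0 : i = 0
      · subst h0; exact ⟨x, x.2, 0, (ℳ 1).zero_mem, by simp⟩
      by_cases h1 : i = 1
      · subst h1; exact ⟨0, (ℳ 0).zero_mem, x, x.2, by simp⟩
      · have hx : (x : M) = 0 := by
          rw [← AddSubgroup.mem_bot, ← hMconc i h0 h1]
          exact x.2
        exact ⟨0, (ℳ 0).zero_mem, 0, (ℳ 1).zero_mem, by simp [hx]⟩
  | add m m' hm hm' =>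
      obtain ⟨x, hx, y, hy, rfl⟩ := hm
      obtain ⟨x', hx', y', hy', rfl⟩ := hm'
      exact ⟨x + x', (ℳ 0).add_mem hx hx', y + y', (ℳ 1).add_mem hy hy', by abel⟩

private lemma aux11_disj : ∀ x : M, x ∈ ℳ 0 → x ∈ ℳ 1 → x = 0 := by
  intro x h0 h1
  have e0 : (DirectSum.decompose ℳ x 0 : M) = x := DirectSum.decompose_of_mem_same ℳ h0
  have e1 : (DirectSum.decompose ℳ x 0 : M) = 0 :=
    DirectSum.decompose_of_mem_ne ℳ h1 (by norm_num)
  rw [← e0, e1]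

include hconc in
private lemma aux11_stab (P : AddSubgroup M)
    (h0 : ∀ a ∈ 𝒜 0, ∀ m ∈ P, (op a) • m ∈ P)
    (h1 : ∀ a ∈ 𝒜 1, ∀ m ∈ P, (op a) • m ∈ P)
    (h2 : ∀ a ∈ 𝒜 2, ∀ m ∈ P, (op a) • m ∈ P) :
    ∀ (c : Λᵐᵒᵖ), ∀ m ∈ P, c • m ∈ P := by
  intro c m hm
  have hc : c = op (unop c) := rfl
  rw [hc]
  generalize unop c = a
  induction a using DirectSum.Decomposition.inductionOn 𝒜 with
  | zero => simpa using P.zero_mem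
  | @homogeneous i x =>
      by_cases hi0 : i = 0
      · subst hi0; exact h0 x x.2 m hm
      by_cases hi1 : i = 1
      · subst hi1; exact h1 x x.2 m hm
      by_cases hi2 : i = 2
      · subst hi2; exact h2 x x.2 m hm
      · have hx : (x : Λ) = 0 := by
          rw [← AddSubgroup.mem_bot, ← hconc i hi0 hi1 hi2]
          exact x.2
        rw [hx]
        simpa using P.zero_mem
  | add x y hx hy =>
      rw [op_add, add_smul]
      exact P.add_mem hx hy

/-- Build a `Λᵐᵒᵖ`-submodule from a suitably stable additive subgroup. -/
private def aux11_subL (P : AddSubgroup M)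
    (h0 : ∀ a ∈ 𝒜 0, ∀ m ∈ P, (op a) • m ∈ P)
    (h1 : ∀ a ∈ 𝒜 1, ∀ m ∈ P, (op a) • m ∈ P)
    (h2 : ∀ a ∈ 𝒜 2, ∀ m ∈ P, (op a) • m ∈ P) : Submodule Λᵐᵒᵖ M where
  carrier := (P : Set M)
  add_mem' := P.add_mem
  zero_mem' := P.zero_mem
  smul_mem' := fun c {x} hx => aux11_stab 𝒜 hconc P h0 h1 h2 c x hx

@[simp] private lemma aux11_subL_mem (P : AddSubgroup M) (h0) (h1) (h2) (x : M) :
    x ∈ aux11_subL 𝒜 hconc P h0 h1 h2 ↔ x ∈ P := Iff.rfl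


section RMod
variable [inst2 : Module (𝒜 0)ᵐᵒᵖ M]
  (hsmul : ∀ (a : (𝒜 0)) (m : M), (op a) • m = (op (a : Λ)) • m)

/-- Build an `(𝒜 0)ᵐᵒᵖ`-submodule from an additive subgroup stable under degree-0 action. -/
private def aux11_subR (P : AddSubgroup M)
    (h0 : ∀ a ∈ 𝒜 0, ∀ m ∈ P, (op a) • m ∈ P) : Submodule (𝒜 0)ᵐᵒᵖ M where
  carrier := (P : Set M)
  add_mem' := P.add_mem
  zero_mem' := P.zero_mem
  smul_mem' := fun c {x} hx => by
    have hc : c = op (unop c) := rfl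
    rw [hc, hsmul (unop c) x]
    exact h0 _ (unop c).2 x hx

@[simp] private lemma aux11_subR_mem (P : AddSubgroup M) (h0) (x : M) :
    x ∈ aux11_subR 𝒜 hsmul P h0 ↔ x ∈ P := Iff.rfl

/-- Restriction of scalars for submodules. -/
private def aux11_res (U : Submodule Λᵐᵒᵖ M) : Submodule (𝒜 0)ᵐᵒᵖ M where
  carrier := (U : Set M)
  add_mem' := U.add_mem
  zero_mem' := U.zero_mem
  smul_mem' := fun c {x} hx => by
    have hc : c = op (unop c) := rfl
    rw [hc, hsmul (unop c) x]
    exact U.smul_mem _ hx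

@[simp] private lemma aux11_res_mem (U : Submodule Λᵐᵒᵖ M) (x : M) :
    x ∈ aux11_res 𝒜 hsmul U ↔ x ∈ U := Iff.rfl

include hsmul in
private lemma aux11_atom_up (P : Submodule (𝒜 0)ᵐᵒᵖ M) (Q : Submodule Λᵐᵒᵖ M)
    (hPQ : ∀ x : M, x ∈ P ↔ x ∈ Q) (hP : IsAtom P) : IsAtom Q := by
  constructor
  · intro hbot
    obtain ⟨x, hxP, hx0⟩ := (Submodule.ne_bot_iff P).mp hP.1
    have : x ∈ Q := (hPQ x).mp hxP
    rw [hbot] at this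
    exact hx0 (by simpa using this)
  · intro B hB
    have hle : aux11_res 𝒜 hsmul B ≤ P := fun x hx => (hPQ x).mpr (hB.le hx)
    have hne : aux11_res 𝒜 hsmul B ≠ P := by
      intro h
      obtain ⟨x, hxQ, hxB⟩ := SetLike.exists_of_lt hB
      exact hxB (by
        have : x ∈ aux11_res 𝒜 hsmul B := h ▸ (hPQ x).mpr hxQ
        exact this)
    have hbot := hP.2 _ (lt_of_le_of_ne hle hne)
    rw [eq_bot_iff]
    intro x hx
    have : x ∈ aux11_res 𝒜 hsmul B := hx
    rw [hbot] at this
    simpa using this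

private lemma aux11_sup_mem (P Q : Submodule (𝒜 0)ᵐᵒᵖ M) (P' Q' : Submodule Λᵐᵒᵖ M)
    (hP : ∀ x : M, x ∈ P ↔ x ∈ P') (hQ : ∀ x : M, x ∈ Q ↔ x ∈ Q') :
    ∀ x : M, x ∈ P ⊔ Q ↔ x ∈ P' ⊔ Q' := by
  intro x
  rw [Submodule.mem_sup, Submodule.mem_sup]
  constructor
  · rintro ⟨y, hy, z, hz, rfl⟩
    exact ⟨y, (hP y).mp hy, z, (hQ z).mp hz, rfl⟩
  · rintro ⟨y, hy, z, hz, rfl⟩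
    exact ⟨y, (hP y).mpr hy, z, (hQ z).mpr hz, rfl⟩

private def aux11_promote (hsmul' : ∀ (a : (𝒜 0)) (m : M), (op a) • m = (op (a : Λ)) • m)
    (hconc' : ∀ n : ℤ, n ≠ 0 → n ≠ 1 → n ≠ 2 → 𝒜 n = ⊥)
    (P : Submodule (𝒜 0)ᵐᵒᵖ M)
    (h1 : ∀ a ∈ 𝒜 1, ∀ m ∈ P, (op a) • m ∈ P)
    (h2 : ∀ a ∈ 𝒜 2, ∀ m ∈ P, (op a) • m ∈ P) : Submodule Λᵐᵒᵖ M :=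
  aux11_subL 𝒜 hconc' P.toAddSubgroup
    (fun a ha m hm => by
      have hm' : m ∈ P := hm
      have hsm := P.smul_mem (op (⟨a, ha⟩ : (𝒜 0))) hm'
      rw [hsmul'] at hsm
      exact hsm)
    h1 h2

@[simp] private lemma aux11_promote_mem (hsmul') (hconc') (P : Submodule (𝒜 0)ᵐᵒᵖ M) (h1) (h2) (x : M) :
    x ∈ aux11_promote 𝒜 hsmul' hconc' P h1 h2 ↔ x ∈ P := Iff.rfl

include hsmul in
private lemma aux11_allkilled_simple [Nontrivial M]
    (hconc : ∀ n : ℤ, n ≠ 0 → n ≠ 1 → n ≠ 2 → 𝒜 n = ⊥)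
    (hssop : IsSemisimpleRing (𝒜 0)ᵐᵒᵖ)
    (hk1 : ∀ a ∈ 𝒜 1, ∀ m : M, (op a) • m = 0)
    (hk2 : ∀ a ∈ 𝒜 2, ∀ m : M, (op a) • m = 0)
    (hind : ∀ U V : Submodule Λᵐᵒᵖ M, U ⊓ V = ⊥ → U ⊔ V = ⊤ → U = ⊥ ∨ V = ⊥) :
    IsSimpleModule Λᵐᵒᵖ M := by
  haveI := hssop
  obtain ⟨x, hx0⟩ := exists_ne (0 : M)
  have hx : x ∈ sSup {S : Submodule (𝒜 0)ᵐᵒᵖ M | S ≤ ⊤ ∧ IsAtom S} :=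
    aux11_atoms (⊤ : Submodule (𝒜 0)ᵐᵒᵖ M) trivial
  have hA : ∃ A : Submodule (𝒜 0)ᵐᵒᵖ M, IsAtom A := by
    by_contra hno
    push_neg at hno
    have hempty : {S : Submodule (𝒜 0)ᵐᵒᵖ M | S ≤ ⊤ ∧ IsAtom S} = ∅ := by
      ext S
      simp only [Set.mem_setOf_eq, Set.mem_empty_iff_false, iff_false, not_and]
      exact fun _ => hno S
    rw [hempty, sSup_empty] at hx
    exact hx0 (by simpa using hx)
  obtain ⟨A, hAatom⟩ := hA
  have hkills : ∀ (P : Submodule (𝒜 0)ᵐᵒᵖ M),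
      (∀ a ∈ 𝒜 1, ∀ m ∈ P, (op a) • m ∈ P) ∧ (∀ a ∈ 𝒜 2, ∀ m ∈ P, (op a) • m ∈ P) := by
    intro P
    exact ⟨fun a ha m _ => by rw [hk1 a ha m]; exact P.zero_mem,
      fun a ha m _ => by rw [hk2 a ha m]; exact P.zero_mem⟩
  let AL : Submodule Λᵐᵒᵖ M := aux11_promote 𝒜 hsmul hconc A (hkills A).1 (hkills A).2
  obtain ⟨Z, hZle, hZinf, hZsup⟩ := aux11_compl (le_top : A ≤ ⊤)
  let ZL : Submodule Λᵐᵒᵖ M := aux11_promote 𝒜 hsmul hconc Z (hkills Z).1 (hkills Z).2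
  have hinf : AL ⊓ ZL = ⊥ := by
    rw [eq_bot_iff]
    intro y hy
    obtain ⟨hyA, hyZ⟩ := Submodule.mem_inf.mp hy
    have : y ∈ A ⊓ Z := Submodule.mem_inf.mpr ⟨hyA, hyZ⟩
    rw [hZinf] at this
    simpa using this
  have hsup : AL ⊔ ZL = ⊤ := by
    rw [eq_top_iff]
    intro y _
    have hy : y ∈ A ⊔ Z := by rw [hZsup]; trivial
    exact (aux11_sup_mem 𝒜 A Z AL ZL (fun _ => Iff.rfl) (fun _ => Iff.rfl) y).mp hy
  have hAne : AL ≠ ⊥ := by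
    intro hbot
    obtain ⟨a, haA, ha0⟩ := (Submodule.ne_bot_iff A).mp hAatom.1
    have : a ∈ AL := haA
    rw [hbot] at this
    exact ha0 (by simpa using this)
  have hZbot : ZL = ⊥ := (hind AL ZL hinf hsup).resolve_left hAne
  have hZbot' : Z = ⊥ := by
    rw [eq_bot_iff]
    intro z hz
    have : z ∈ ZL := hz
    rw [hZbot] at this
    simpa using this
  have hAtop : A = ⊤ := by rw [← hZsup, hZbot', sup_bot_eq]
  have htopatom : IsAtom (⊤ : Submodule Λᵐᵒᵖ M) :=
    aux11_atom_up 𝒜 hsmul ⊤ ⊤ (fun _ => by simp) (hAtop ▸ hAatom)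
  have hntl : Nontrivial (Submodule Λᵐᵒᵖ M) := by
    refine ⟨⟨⊥, ⊤, fun h => hx0 ?_⟩⟩
    have : x ∈ (⊥ : Submodule Λᵐᵒᵖ M) := by rw [h]; trivial
    simpa using this
  exact { toIsSimpleOrder := ⟨fun B => by
    rcases eq_or_lt_of_le (le_top : B ≤ ⊤) with h | h
    · exact Or.inr h
    · exact Or.inl (htopatom.2 B h)⟩ }

include hsmul hconc hMconc hM in
private lemma aux11_caseC [Nontrivial M]
    (hssop : IsSemisimpleRing (𝒜 0)ᵐᵒᵖ)
    (hind : ∀ U V : Submodule Λᵐᵒᵖ M, U ⊓ V = ⊥ → U ⊔ V = ⊤ → U = ⊥ ∨ V = ⊥)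
    (hex0 : ∃ x ∈ ℳ 0, x ≠ (0:M)) (hex1 : ∃ x ∈ ℳ 1, x ≠ (0:M)) :
    Submodule.span Λᵐᵒᵖ ((ℳ 0 : Set M)) = ⊤ ∧
      ((sSup {S : Submodule Λᵐᵒᵖ M | IsSimpleModule Λᵐᵒᵖ S} : Submodule Λᵐᵒᵖ M) : Set M)
        = (ℳ 1 : Set M) := by
  haveI := hssop
  have hk2 : ∀ a ∈ 𝒜 2, ∀ m : M, (op a) • m = 0 := aux11_kill2 𝒜 ℳ hMconc hM
  have hdec : ∀ m : M, ∃ x ∈ ℳ 0, ∃ y ∈ ℳ 1, m = x + y := aux11_dec ℳ hMconc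
  have hdisj : ∀ x : M, x ∈ ℳ 0 → x ∈ ℳ 1 → x = 0 := aux11_disj ℳ
  have hMM00 : ∀ a ∈ 𝒜 0, ∀ m ∈ ℳ 0, (op a) • m ∈ ℳ 0 := by
    intro a ha m hm
    have := hM 0 0 a ha m hm
    rwa [show (0:ℤ)+0 = 0 by norm_num] at this
  have hMM10 : ∀ a ∈ 𝒜 0, ∀ m ∈ ℳ 1, (op a) • m ∈ ℳ 1 := by
    intro a ha m hm
    have := hM 0 1 a ha m hm
    rwa [show (1:ℤ)+0 = 1 by norm_num] at this
  have hMM01 : ∀ a ∈ 𝒜 1, ∀ m ∈ ℳ 0, (op a) • m ∈ ℳ 1 := by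
    intro a ha m hm
    have := hM 1 0 a ha m hm
    rwa [show (0:ℤ)+1 = 1 by norm_num] at this
  have hk1 : ∀ a ∈ 𝒜 1, ∀ m ∈ ℳ 1, (op a) • m = 0 := by
    intro a ha m hm
    have := hM 1 1 a ha m hm
    rw [show (1:ℤ)+1 = 2 by norm_num, hMconc 2 (by norm_num) (by norm_num)] at this
    simpa using this
  -- key degree-one fact : action of 𝒜 1 on any element only sees the degree-0 part
  have hact1 : ∀ a ∈ 𝒜 1, ∀ x0 ∈ ℳ 0, ∀ x1 ∈ ℳ 1, (op a) • (x0 + x1) = (op a) • x0 := by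
    intro a ha x0 h0 x1 h1
    rw [smul_add, hk1 a ha x1 h1, add_zero]
  -- the submodule `ℳ 1`
  let M1R : Submodule (𝒜 0)ᵐᵒᵖ M := aux11_subR 𝒜 hsmul (ℳ 1) hMM10
  let M1L : Submodule Λᵐᵒᵖ M := aux11_promote 𝒜 hsmul hconc M1R
    (fun a ha m hm => by rw [hk1 a ha m hm]; exact (ℳ 1).zero_mem) 
    (fun a ha m _ => by rw [hk2 a ha m]; exact (ℳ 1).zero_mem)
  have hM1Lmem : ∀ x : M, x ∈ M1L ↔ x ∈ ℳ 1 := fun _ => Iff.rfl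
  -- the subgroup T
  let T : AddSubgroup M :=
    { carrier := {m : M | m ∈ ℳ 0 ∧ ∀ a ∈ 𝒜 1, (op a) • m = 0}
      add_mem' := fun hx hy => ⟨(ℳ 0).add_mem hx.1 hy.1,
        fun a ha => by rw [smul_add, hx.2 a ha, hy.2 a ha, add_zero]⟩
      zero_mem' := ⟨(ℳ 0).zero_mem, fun a _ => smul_zero _⟩
      neg_mem' := fun hx => ⟨(ℳ 0).neg_mem hx.1,
        fun a ha => by rw [smul_neg, hx.2 a ha, neg_zero]⟩ }
  have hTmem : ∀ x : M, x ∈ T ↔ (x ∈ ℳ 0 ∧ ∀ a ∈ 𝒜 1, (op a) • x = 0) := fun _ => Iff.rfl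
  let TR : Submodule (𝒜 0)ᵐᵒᵖ M := aux11_subR 𝒜 hsmul T
    (fun a ha m hm => ⟨hMM00 a ha m hm.1, fun b hb => by
      rw [smul_smul]
      have hmul : (op b) * (op a) = op (a * b) := rfl
      have hab : a * b ∈ 𝒜 1 := by
        have := SetLike.mul_mem_graded ha hb
        rwa [show (0:ℤ)+1 = 1 by norm_num] at this
      rw [hmul]
      exact hm.2 _ hab⟩)
  let TL : Submodule Λᵐᵒᵖ M := aux11_promote 𝒜 hsmul hconc TR
    (fun a ha m hm => by rw [hm.2 a ha]; exact TR.zero_mem)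
    (fun a ha m _ => by rw [hk2 a ha m]; exact TR.zero_mem)
  -- T = 0
  have hT : ∀ m : M, m ∈ T → m = 0 := by
    obtain ⟨D, hDle, hDinf, hDsup⟩ := aux11_compl (le_top : (TR ⊔ M1R) ≤ ⊤)
    set C : Submodule (𝒜 0)ᵐᵒᵖ M := M1R ⊔ D with hCdef
    have hM1C : M1R ≤ C := le_sup_left
    have hTCinf : ∀ x : M, x ∈ TR → x ∈ C → x = 0 := by
      intro x hxT hxC
      obtain ⟨m1, hm1, d, hd, rfl⟩ := Submodule.mem_sup.mp hxC
      have hdmem : d ∈ (TR ⊔ M1R) ⊓ D := by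
        refine Submodule.mem_inf.mpr ⟨?_, hd⟩
        have : (m1 + d) - m1 ∈ TR ⊔ M1R :=
          Submodule.sub_mem _ (Submodule.mem_sup_left hxT) (Submodule.mem_sup_right hm1)
        simpa using this
      rw [hDinf] at hdmem
      have hd0 : d = 0 := by simpa using hdmem
      subst hd0
      rw [add_zero]
      exact hdisj m1 (by simpa using (hTmem m1).mp (by simpa using (show m1 + 0 ∈ T from hxT)) |>.1) hm1
    have hC1 : ∀ a ∈ 𝒜 1, ∀ m ∈ C, (op a) • m ∈ C := by
      intro a ha m _
      obtain ⟨x0, hx0, x1, hx1, rfl⟩ := hdec m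
      rw [hact1 a ha x0 hx0 x1 hx1]
      exact hM1C (hMM01 a ha x0 hx0)
    have hC2 : ∀ a ∈ 𝒜 2, ∀ m ∈ C, (op a) • m ∈ C := fun a ha m _ => by
      rw [hk2 a ha m]; exact C.zero_mem
    let CL : Submodule Λᵐᵒᵖ M := aux11_promote 𝒜 hsmul hconc C hC1 hC2
    have hinf : TL ⊓ CL = ⊥ := by
      rw [eq_bot_iff]
      intro y hy
      obtain ⟨hyT, hyC⟩ := Submodule.mem_inf.mp hy
      simpa using hTCinf y hyT hyC
    have hsup : TL ⊔ CL = ⊤ := by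
      rw [eq_top_iff]
      intro y _
      have hy : y ∈ TR ⊔ C := by
        rw [hCdef, ← sup_assoc, hDsup]
        trivial
      exact (aux11_sup_mem 𝒜 TR C TL CL (fun _ => Iff.rfl) (fun _ => Iff.rfl) y).mp hy
    have hCne : CL ≠ ⊥ := by
      intro hbot
      obtain ⟨x1, hx1, hx1ne⟩ := hex1
      have : x1 ∈ CL := hM1C (by exact hx1)
      rw [hbot] at this
      exact hx1ne (by simpa using this)
    have hTbot : TL = ⊥ := (hind TL CL hinf hsup).resolve_right hCne
    intro m hm
    have : m ∈ TL := hm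
    rw [hTbot] at this
    simpa using this
  -- generated in degree 0
  have hgen : Submodule.span Λᵐᵒᵖ ((ℳ 0 : Set M)) = ⊤ := by
    set N : Submodule Λᵐᵒᵖ M := Submodule.span Λᵐᵒᵖ ((ℳ 0 : Set M)) with hNdef
    have hM0N : ∀ x ∈ ℳ 0, x ∈ N := fun x hx => Submodule.subset_span hx
    set NR : Submodule (𝒜 0)ᵐᵒᵖ M := aux11_res 𝒜 hsmul N with hNRdef
    obtain ⟨K, hKle, hKinf, hKsup⟩ := aux11_compl (inf_le_right : NR ⊓ M1R ≤ M1R)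
    let KL : Submodule Λᵐᵒᵖ M := aux11_promote 𝒜 hsmul hconc K
      (fun a ha m hm => by rw [hk1 a ha m (hKle hm)]; exact K.zero_mem)
      (fun a ha m _ => by rw [hk2 a ha m]; exact K.zero_mem)
    have hinf : N ⊓ KL = ⊥ := by
      rw [eq_bot_iff]
      intro y hy
      obtain ⟨hyN, hyK⟩ := Submodule.mem_inf.mp hy
      have : y ∈ (NR ⊓ M1R) ⊓ K :=
        Submodule.mem_inf.mpr ⟨Submodule.mem_inf.mpr ⟨hyN, hKle hyK⟩, hyK⟩
      rw [hKinf] at this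
      simpa using this
    have hsup : N ⊔ KL = ⊤ := by
      rw [eq_top_iff]
      intro y _
      obtain ⟨x0, hx0, x1, hx1, rfl⟩ := hdec y
      have hx1' : x1 ∈ (NR ⊓ M1R) ⊔ K := by rw [hKsup]; exact hx1
      obtain ⟨u, hu, k, hk, huk⟩ := Submodule.mem_sup.mp hx1'
      have huN : u ∈ N := (Submodule.mem_inf.mp hu).1
      refine Submodule.mem_sup.mpr ⟨x0 + u, N.add_mem (hM0N x0 hx0) huN, k, hk, ?_⟩
      rw [add_assoc, huk]
    rcases hind N KL hinf hsup with hNbot | hKbot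
    · exfalso
      obtain ⟨x0, hx0, hx0ne⟩ := hex0
      have : x0 ∈ N := hM0N x0 hx0
      rw [hNbot] at this
      exact hx0ne (by simpa using this)
    · have hKbot' : ∀ x ∈ K, x = (0:M) := by
        intro x hx
        have : x ∈ KL := hx
        rw [hKbot] at this
        simpa using this
      have hM1N : ∀ x ∈ ℳ 1, x ∈ N := by
        intro x hx
        have : x ∈ (NR ⊓ M1R) ⊔ K := by rw [hKsup]; exact hx
        obtain ⟨u, hu, k, hk, huk⟩ := Submodule.mem_sup.mp this
        have hk0 : k = 0 := hKbot' k hk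
        have : x = u := by rw [← huk, hk0, add_zero]
        rw [this]
        exact (Submodule.mem_inf.mp hu).1
      rw [eq_top_iff]
      intro y _
      obtain ⟨x0, hx0, x1, hx1, rfl⟩ := hdec y
      exact N.add_mem (hM0N x0 hx0) (hM1N x1 hx1)
  refine ⟨hgen, ?_⟩
  -- socle = ℳ 1
  have hle : (sSup {S : Submodule Λᵐᵒᵖ M | IsSimpleModule Λᵐᵒᵖ S} : Submodule Λᵐᵒᵖ M) ≤ M1L := by
    refine sSup_le fun S hS => ?_
    haveI : IsSimpleModule Λᵐᵒᵖ S := hS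
    have hatomS : IsAtom S := isSimpleModule_iff_isAtom.mp hS
    rcases eq_or_lt_of_le (inf_le_right : M1L ⊓ S ≤ S) with heq | hlt
    · intro y hy
      have : y ∈ M1L ⊓ S := heq.symm ▸ hy
      exact (Submodule.mem_inf.mp this).1
    · exfalso
      have hYbot : M1L ⊓ S = ⊥ := hatomS.2 _ hlt
      apply hatomS.1
      rw [eq_bot_iff]
      intro s hs
      obtain ⟨s0, hs0, s1, hs1, rfl⟩ := hdec s
      have hs0k : ∀ a ∈ 𝒜 1, (op a) • s0 = 0 := by
        intro a ha
        have hmem : (op a) • (s0 + s1) ∈ M1L ⊓ S := by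
          refine Submodule.mem_inf.mpr ⟨?_, S.smul_mem _ hs⟩
          rw [hact1 a ha s0 hs0 s1 hs1]
          exact hMM01 a ha s0 hs0
        rw [hYbot] at hmem
        have : (op a) • (s0 + s1) = 0 := by simpa using hmem
        rwa [hact1 a ha s0 hs0 s1 hs1] at this
      have hs00 : s0 = 0 := hT s0 ((hTmem s0).mpr ⟨hs0, hs0k⟩)
      have hsmem : s0 + s1 ∈ M1L ⊓ S := by
        refine Submodule.mem_inf.mpr ⟨?_, hs⟩
        rw [hs00, zero_add]
        exact hs1
      rw [hYbot] at hsmem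
      simpa using hsmem
  apply Set.Subset.antisymm
  · intro x hx
    exact (hM1Lmem x).mp (hle hx)
  · intro x hx
    have hx' : x ∈ M1R := hx
    have hxs : x ∈ sSup {S : Submodule (𝒜 0)ᵐᵒᵖ M | S ≤ M1R ∧ IsAtom S} := aux11_atoms M1R hx'
    have hfin : sSup {S : Submodule (𝒜 0)ᵐᵒᵖ M | S ≤ M1R ∧ IsAtom S} ≤
        aux11_res 𝒜 hsmul (sSup {S : Submodule Λᵐᵒᵖ M | IsSimpleModule Λᵐᵒᵖ S}) := by
      refine sSup_le ?_
      rintro S ⟨hSle, hSatom⟩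
      let SL : Submodule Λᵐᵒᵖ M := aux11_promote 𝒜 hsmul hconc S
        (fun a ha m hm => by rw [hk1 a ha m (hSle hm)]; exact S.zero_mem)
        (fun a ha m _ => by rw [hk2 a ha m]; exact S.zero_mem)
      have hSLatom : IsAtom SL := aux11_atom_up 𝒜 hsmul S SL (fun _ => Iff.rfl) hSatom
      have hSLsimple : IsSimpleModule Λᵐᵒᵖ SL := isSimpleModule_iff_isAtom.mpr hSLatom
      have hSLle : SL ≤ sSup {S : Submodule Λᵐᵒᵖ M | IsSimpleModule Λᵐᵒᵖ S} :=
        le_sSup hSLsimple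
      intro y hy
      exact hSLle (show y ∈ SL from hy)
    exact hfin hxs

end RMod
end Hyps
end GRADED



/-- Let `Λ` be an internally ℕ-graded ring with components `𝒜 0, 𝒜 1, 𝒜 2` (and `𝒜 n = 0`
otherwise), `𝒜 0` semisimple, and with the socle of `Λ` as a right `Λ`-module equal to
`𝒜 2`.  If `M` is a nonzero indecomposable graded right `Λ`-module concentrated in
degrees 0 and 1, then exactly one of the following holds: (i) `M₁ = 0` and `M` is simple;
(ii) `M₀ = 0` and `M` is simple; (iii) `M` is generated in degree 0 and the socle of `M`
equals `M₁`. -/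
theorem stmt_11 {Λ : Type*} [Ring Λ] (𝒜 : ℤ → AddSubgroup Λ) [GradedRing 𝒜]
    (hconc : ∀ n : ℤ, n ≠ 0 → n ≠ 1 → n ≠ 2 → 𝒜 n = ⊥)
    (hss : IsSemisimpleRing (𝒜 0))
    (hsoc : ((sSup {S : Submodule Λᵐᵒᵖ Λ | IsSimpleModule Λᵐᵒᵖ S} :
        Submodule Λᵐᵒᵖ Λ) : Set Λ) = (𝒜 2 : Set Λ))
    {M : Type*} [AddCommGroup M] [Module Λᵐᵒᵖ M] [Nontrivial M]
    (ℳ : ℤ → AddSubgroup M) [DirectSum.Decomposition ℳ]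
    (hM : ∀ (i n : ℤ), ∀ a ∈ 𝒜 i, ∀ m ∈ ℳ n, (MulOpposite.op a) • m ∈ ℳ (n + i))
    (hMconc : ∀ n : ℤ, n ≠ 0 → n ≠ 1 → ℳ n = ⊥)
    (hind : ∀ U V : Submodule Λᵐᵒᵖ M, U ⊓ V = ⊥ → U ⊔ V = ⊤ → U = ⊥ ∨ V = ⊥) :
    ((ℳ 1 = ⊥ ∧ IsSimpleModule Λᵐᵒᵖ M) ∧
      ¬(ℳ 0 = ⊥ ∧ IsSimpleModule Λᵐᵒᵖ M) ∧
      ¬(Submodule.span Λᵐᵒᵖ (ℳ 0 : Set M) = ⊤ ∧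
        ((sSup {S : Submodule Λᵐᵒᵖ M | IsSimpleModule Λᵐᵒᵖ S} :
          Submodule Λᵐᵒᵖ M) : Set M) = (ℳ 1 : Set M))) ∨
    (¬(ℳ 1 = ⊥ ∧ IsSimpleModule Λᵐᵒᵖ M) ∧
      (ℳ 0 = ⊥ ∧ IsSimpleModule Λᵐᵒᵖ M) ∧
      ¬(Submodule.span Λᵐᵒᵖ (ℳ 0 : Set M) = ⊤ ∧
        ((sSup {S : Submodule Λᵐᵒᵖ M | IsSimpleModule Λᵐᵒᵖ S} :
          Submodule Λᵐᵒᵖ M) : Set M) = (ℳ 1 : Set M))) ∨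
    (¬(ℳ 1 = ⊥ ∧ IsSimpleModule Λᵐᵒᵖ M) ∧
      ¬(ℳ 0 = ⊥ ∧ IsSimpleModule Λᵐᵒᵖ M) ∧
      (Submodule.span Λᵐᵒᵖ (ℳ 0 : Set M) = ⊤ ∧
        ((sSup {S : Submodule Λᵐᵒᵖ M | IsSimpleModule Λᵐᵒᵖ S} :
          Submodule Λᵐᵒᵖ M) : Set M) = (ℳ 1 : Set M))) := by
    classical
  letI inst2 : Module (𝒜 0)ᵐᵒᵖ M := aux11_rmod 𝒜
  have hsmul : ∀ (a : (𝒜 0)) (m : M), (op a) • m = (op (a : Λ)) • m := fun _ _ => rfl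
  haveI hss' : IsSemisimpleRing (𝒜 0) := hss
  haveI hssop : IsSemisimpleRing (𝒜 0)ᵐᵒᵖ := aux11_rss
  have hk2 : ∀ a ∈ 𝒜 2, ∀ m : M, (op a) • m = 0 := aux11_kill2 𝒜 ℳ hMconc hM
  have hdec : ∀ m : M, ∃ x ∈ ℳ 0, ∃ y ∈ ℳ 1, m = x + y := aux11_dec ℳ hMconc
  by_cases h1 : ℳ 1 = ⊥
  · by_cases h0 : ℳ 0 = ⊥
    · exfalso
      obtain ⟨x, hx⟩ := exists_ne (0 : M)
      obtain ⟨a, ha, b, hb, rfl⟩ := hdec x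
      rw [h0] at ha
      rw [h1] at hb
      apply hx
      rw [show a = 0 by simpa using ha, show b = 0 by simpa using hb, add_zero]
    · -- case (i)
      have hk1' : ∀ a ∈ 𝒜 1, ∀ m : M, (op a) • m = 0 := by
        intro a ha m
        obtain ⟨x, hx, y, hy, rfl⟩ := hdec m
        have hy0 : y = 0 := by rw [h1] at hy; simpa using hy
        have hxmem : (op a) • x ∈ ℳ (0 + 1) := hM 1 0 a ha x hx
        rw [show (0:ℤ)+1 = 1 by norm_num, h1] at hxmem
        rw [hy0, add_zero]
        simpa using hxmem
      have hsimple : IsSimpleModule Λᵐᵒᵖ M :=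
        aux11_allkilled_simple 𝒜 hsmul hconc hssop hk1' hk2 hind
      refine Or.inl ⟨⟨h1, hsimple⟩, ?_, ?_⟩
      · rintro ⟨h0', -⟩; exact h0 h0'
      · rintro ⟨-, hsocM⟩
        obtain ⟨x, hx⟩ := exists_ne (0 : M)
        haveI := hsimple
        have htopsimple : IsSimpleModule Λᵐᵒᵖ (⊤ : Submodule Λᵐᵒᵖ M) :=
          IsSimpleModule.congr Submodule.topEquiv
        have hxmem : x ∈ (sSup {S : Submodule Λᵐᵒᵖ M | IsSimpleModule Λᵐᵒᵖ S} :
            Submodule Λᵐᵒᵖ M) := by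
          have hmem : (⊤ : Submodule Λᵐᵒᵖ M) ∈
              {S : Submodule Λᵐᵒᵖ M | IsSimpleModule Λᵐᵒᵖ S} := htopsimple
          exact le_sSup hmem trivial
        have hxset : x ∈ ((sSup {S : Submodule Λᵐᵒᵖ M | IsSimpleModule Λᵐᵒᵖ S} :
            Submodule Λᵐᵒᵖ M) : Set M) := hxmem
        rw [hsocM, h1] at hxset
        exact hx (by simpa using hxset)
  · by_cases h0 : ℳ 0 = ⊥
    · -- case (ii)
      have hk1' : ∀ a ∈ 𝒜 1, ∀ m : M, (op a) • m = 0 := by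
        intro a ha m
        obtain ⟨x, hx, y, hy, rfl⟩ := hdec m
        have hx0 : x = 0 := by rw [h0] at hx; simpa using hx
        have hy1 : (op a) • y ∈ ℳ (1+1) := hM 1 1 a ha y hy
        rw [show (1:ℤ)+1 = 2 by norm_num, hMconc 2 (by norm_num) (by norm_num)] at hy1
        rw [hx0, zero_add]
        simpa using hy1
      have hsimple : IsSimpleModule Λᵐᵒᵖ M :=
        aux11_allkilled_simple 𝒜 hsmul hconc hssop hk1' hk2 hind
      refine Or.inr (Or.inl ⟨?_, ⟨h0, hsimple⟩, ?_⟩)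
      · rintro ⟨h1', -⟩; exact h1 h1'
      · rintro ⟨hspan, -⟩
        obtain ⟨x, hx⟩ := exists_ne (0 : M)
        have hset : (ℳ 0 : Set M) = ({0} : Set M) := by rw [h0]; rfl
        rw [hset, Submodule.span_zero_singleton] at hspan
        have : x ∈ (⊥ : Submodule Λᵐᵒᵖ M) := by rw [hspan]; trivial
        exact hx (by simpa using this)
    · -- case (iii)
      have hex0 : ∃ x ∈ ℳ 0, x ≠ (0:M) := by
        by_contra h
        push_neg at h
        exact h0 ((AddSubgroup.eq_bot_iff_forall _).mpr h)
      have hex1 : ∃ x ∈ ℳ 1, x ≠ (0:M) := by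
        by_contra h
        push_neg at h
        exact h1 ((AddSubgroup.eq_bot_iff_forall _).mpr h)
      obtain ⟨hgen, hsocM⟩ := aux11_caseC 𝒜 ℳ hconc hMconc hM hsmul hssop hind hex0 hex1
      refine Or.inr (Or.inr ⟨?_, ?_, hgen, hsocM⟩)
      · rintro ⟨h1', -⟩; exact h1 h1'
      · rintro ⟨h0', -⟩; exact h0 h0'
end

section
/- Let d ≥ 1 and let Λ be an (internally) ℕ-graded ring with 𝒜ₙ = 0 for n > d, such that 𝒜₀ is a semisimple ring and the socle of Λ as a right Λ-module equals 𝒜_d (every simple right Λ-submodule of Λ is contained in 𝒜_d, and 𝒜_d is a sum of simple right Λ-submodules). Let M be a graded right Λ-module with Mₙ = 0 for all n outside {0, 1, …, d−1}, generated in degree 0, and let p : P → M be a surjective degree-preserving Λ-linear map from a graded projective right Λ-module P generated in degree 0, restricting to a bijection P₀ → M₀. Then K = ker p is a graded submodule of P concentrated in degrees 1 through d (Kₙ = 0 unless 1 ≤ n ≤ d), and the socle of K equals its degree-d component K ∩ P_d (every simple Λ-submodule of K is contained in K ∩ P_d, and K ∩ P_d is a sum of simple Λ-submodules). -/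
/-!
The kernel is graded because `p` preserves degrees, and vanishes in degree `0` because `p` is
injective on `P₀`. Since `P` is generated by `P₀`, a homogeneous element of degree `n` is a sum
`∑ yⱼ aⱼ` with `yⱼ ∈ P₀` and `aⱼ ∈ 𝒜ₙ`; hence `P` lives in degrees `0, …, d` and
`P_d = P₀ · soc Λ`, which is semisimple as a sum of images of `soc Λ`. Writing `P` as a direct
summand of a free module, the coordinates of a simple submodule of `P` are zero or simple right
ideals, so every simple submodule of `P` lies in `P₀ · soc Λ = P_d`. Once all simple submodules lie
in a semisimple submodule `Q`, the socle of any submodule `K` is `K ∩ Q`.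
-/

open MulOpposite DirectSum

section SimpleSubmodules

variable {R M N : Type*} [Ring R] [AddCommGroup M] [Module R M] [AddCommGroup N] [Module R N]

theorem Submodule.map_le_sSup_simples (S : Submodule R M) [IsSimpleModule R S]
    (f : M →ₗ[R] N) : S.map f ≤ sSup {T : Submodule R N | IsSimpleModule R T} := by
  rw [← S.range_subtype, ← LinearMap.range_comp]
  obtain inj | eq := (f ∘ₗ S.subtype).injective_or_eq_zero
  · exact le_sSup (IsSimpleModule.congr (LinearEquiv.ofInjective _ inj).symm)
  · simp [eq]

variable (R M) in
theorem isSemisimpleModule_sSup_simples :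
    IsSemisimpleModule R ↥(sSup {T : Submodule R M | IsSimpleModule R T}) := by
  rw [sSup_eq_iSup]
  exact isSemisimpleModule_biSup_of_isSemisimpleModule_submodule
    fun T (_ : IsSimpleModule R T) => inferInstance

theorem isSemisimpleModule_iSup_map {ι : Type*} (L : Submodule R M) [IsSemisimpleModule R L]
    (f : ι → M →ₗ[R] N) : IsSemisimpleModule R ↥(⨆ i, L.map (f i)) := by
  rw [← iSup_univ]
  refine isSemisimpleModule_biSup_of_isSemisimpleModule_submodule fun i _ => ?_
  rw [← L.range_subtype, ← LinearMap.range_comp]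
  exact .range _

theorem Submodule.sSup_simples_le_of_isSemisimpleModule (Q : Submodule R M)
    [IsSemisimpleModule R Q] : sSup {S : Submodule R M | IsSimpleModule R S ∧ S ≤ Q} = Q := by
  refine le_antisymm (sSup_le fun S hS => hS.2) ?_
  conv_lhs => rw [← Q.map_subtype_top, ← IsSemisimpleModule.sSup_simples_eq_top R Q]
  rw [sSup_eq_iSup, Submodule.map_iSup]
  refine iSup_le fun T => ?_
  rw [Submodule.map_iSup]
  refine iSup_le fun (_ : IsSimpleModule R T) => le_sSup ⟨?_, Q.map_subtype_le T⟩
  exact .congr (T.equivMapOfInjective _ Q.subtype_injective).symm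

theorem Submodule.sSup_simples_le_eq_inf (Q : Submodule R M) [IsSemisimpleModule R Q]
    (hQ : ∀ S : Submodule R M, IsSimpleModule R S → S ≤ Q) (K : Submodule R M) :
    sSup {S : Submodule R M | IsSimpleModule R S ∧ S ≤ K} = K ⊓ Q := by
  have : IsSemisimpleModule R ↥(K ⊓ Q) :=
    .of_injective _ (Submodule.inclusion_injective (inf_le_right : K ⊓ Q ≤ Q))
  refine le_antisymm (sSup_le fun S ⟨hS, hSK⟩ => le_inf hSK (hQ S hS)) ?_
  rw [← (K ⊓ Q).sSup_simples_le_of_isSemisimpleModule]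
  exact sSup_le_sSup fun S ⟨hS, hSKQ⟩ => ⟨hS, hSKQ.trans inf_le_left⟩

end SimpleSubmodules

section RightModules

variable {Λ P : Type*} [Ring Λ] [AddCommGroup P] [Module Λᵐᵒᵖ P]

def toSpanSingletonRight (y : P) : Λ →ₗ[Λᵐᵒᵖ] P where
  toFun a := op a • y
  map_add' a b := by rw [op_add, add_smul]
  map_smul' r a := by
    rw [RingHom.id_apply, smul_eq_mul_unop, op_mul, op_unop, mul_smul]

@[simp]
theorem toSpanSingletonRight_apply (y : P) (a : Λ) : toSpanSingletonRight y a = op a • y := rfl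

variable (Λ) in
noncomputable def rightCombination (G : Set P) : (G →₀ Λ) →ₗ[Λᵐᵒᵖ] P :=
  Finsupp.lsum ℕ fun g => toSpanSingletonRight (g : P)

variable (Λ) in
theorem rightCombination_apply (G : Set P) (c : G →₀ Λ) :
    rightCombination Λ G c = c.sum fun g a => op a • (g : P) := rfl

theorem rightCombination_surjective {G : Set P} (hG : Submodule.span Λᵐᵒᵖ G = ⊤) :
    Function.Surjective (rightCombination Λ G) := by
  rw [← LinearMap.range_eq_top, eq_top_iff, ← hG, Submodule.span_le]
  intro g hg
  exact ⟨Finsupp.single ⟨g, hg⟩ 1, by simp [rightCombination_apply]⟩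

theorem le_iSup_map_sSup_simples [Module.Projective Λᵐᵒᵖ P] {G : Set P}
    (hG : Submodule.span Λᵐᵒᵖ G = ⊤) (S : Submodule Λᵐᵒᵖ P) [IsSimpleModule Λᵐᵒᵖ S] :
    S ≤ ⨆ g : G, (sSup {T : Submodule Λᵐᵒᵖ Λ | IsSimpleModule Λᵐᵒᵖ T}).map
      (toSpanSingletonRight (g : P)) := by
  obtain ⟨s, hs⟩ := Module.projective_lifting_property _ LinearMap.id
    (rightCombination_surjective hG)
  intro x hx
  rw [← LinearMap.id_apply (R := Λᵐᵒᵖ) x, ← hs, LinearMap.comp_apply, rightCombination_apply]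
  refine Submodule.finsuppSum_mem _ _ _ _ fun g _ => Submodule.mem_iSup_of_mem g ⟨_, ?_, rfl⟩
  exact S.map_le_sSup_simples (Finsupp.lapply g ∘ₗ s) ⟨x, hx, rfl⟩

end RightModules

section Graded

variable {ι : Type*} [DecidableEq ι]

theorem map_directSumDecompose_of_mapsTo {M N σ τ F : Type*} [AddCommMonoid M]
    [AddCommMonoid N] [SetLike σ M] [AddSubmonoidClass σ M] [SetLike τ N]
    [AddSubmonoidClass τ N] (ℳ : ι → σ) (𝒩 : ι → τ) [Decomposition ℳ] [Decomposition 𝒩]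
    [FunLike F M N] [AddMonoidHomClass F M N] (f : F) (hf : ∀ i, Set.MapsTo f (ℳ i) (𝒩 i))
    (x : M) (n : ι) : f (decompose ℳ x n) = decompose 𝒩 (f x) n := by
  induction x using Decomposition.inductionOn ℳ with
  | zero => simp
  | @homogeneous i m =>
    by_cases h : i = n
    · subst h
      rw [decompose_of_mem_same _ m.2, decompose_of_mem_same _ (hf i m.2)]
    · rw [decompose_of_mem_ne _ m.2 h, decompose_of_mem_ne _ (hf i m.2) h, map_zero]
  | add x y hx hy =>
    rw [decompose_add, DirectSum.add_apply, AddMemClass.coe_add, map_add, hx, hy, map_add,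
      decompose_add, DirectSum.add_apply, AddMemClass.coe_add]

variable {Λ P : Type*} [Ring Λ] [AddCommGroup P] [Module Λᵐᵒᵖ P] [Zero ι]
  {𝒜 : ι → AddSubgroup Λ} {𝒬 : ι → AddSubgroup P} [Decomposition 𝒜] [Decomposition 𝒬]

theorem decompose_op_smul_of_mem_zero (h𝒬 : ∀ i, ∀ a ∈ 𝒜 i, ∀ y ∈ 𝒬 0, op a • y ∈ 𝒬 i)
    {y : P} (hy : y ∈ 𝒬 0) (a : Λ) (n : ι) :
    (decompose 𝒬 (op a • y) n : P) = op (decompose 𝒜 a n : Λ) • y :=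
  (map_directSumDecompose_of_mapsTo 𝒜 𝒬 (toSpanSingletonRight y)
    (fun i _ ha => h𝒬 i _ ha y hy) a n).symm

theorem coe_iSup_map_toSpanSingletonRight (h𝒬 : ∀ i, ∀ a ∈ 𝒜 i, ∀ y ∈ 𝒬 0, op a • y ∈ 𝒬 i)
    (hgen : Submodule.span Λᵐᵒᵖ (𝒬 0 : Set P) = ⊤) {n : ι} {N : Submodule Λᵐᵒᵖ Λ}
    (hN : (N : Set Λ) = 𝒜 n) :
    ((⨆ y : (𝒬 0 : Set P), N.map (toSpanSingletonRight (y : P)) : Submodule Λᵐᵒᵖ P) :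
      Set P) = 𝒬 n := by
  ext x
  constructor
  · intro hx
    refine Submodule.iSup_induction _ (motive := (· ∈ 𝒬 n)) hx ?_ (zero_mem _) fun _ _ => add_mem
    rintro y _ ⟨a, ha, rfl⟩
    exact h𝒬 n a (show a ∈ (𝒜 n : Set Λ) from hN ▸ ha) y y.2
  · intro hx
    obtain ⟨c, rfl⟩ := rightCombination_surjective hgen x
    rw [SetLike.mem_coe, ← decompose_of_mem_same 𝒬 hx, rightCombination_apply, Finsupp.sum,
      decompose_sum, DFinsupp.finsetSum_apply, AddSubgroup.val_finsetSum]
    refine Submodule.sum_mem _ fun g _ => Submodule.mem_iSup_of_mem g ?_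
    rw [decompose_op_smul_of_mem_zero h𝒬 g.2]
    exact ⟨_, hN ▸ SetLike.coe_mem _, rfl⟩

theorem eq_zero_of_mem_of_eq_bot (h𝒬 : ∀ i, ∀ a ∈ 𝒜 i, ∀ y ∈ 𝒬 0, op a • y ∈ 𝒬 i)
    (hgen : Submodule.span Λᵐᵒᵖ (𝒬 0 : Set P) = ⊤) {n : ι} (h𝒜 : 𝒜 n = ⊥) {x : P}
    (hx : x ∈ 𝒬 n) : x = 0 := by
  have h := coe_iSup_map_toSpanSingletonRight (N := ⊥) h𝒬 hgen (by rw [h𝒜]; rfl)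
  simp only [Submodule.map_bot, iSup_bot, Submodule.bot_coe] at h
  rw [← Set.mem_singleton_iff, h]
  exact hx

end Graded

theorem stmt_12_general {Λ : Type*} [Ring Λ] (d : ℕ)
    (𝒜 : ℤ → AddSubgroup Λ) [GradedRing 𝒜]
    (hconc : ∀ n : ℤ, n < 0 ∨ (d : ℤ) < n → 𝒜 n = ⊥)
    (hsoc : ((sSup {S : Submodule Λᵐᵒᵖ Λ | IsSimpleModule Λᵐᵒᵖ S} :
        Submodule Λᵐᵒᵖ Λ) : Set Λ) = (𝒜 (d : ℤ) : Set Λ))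
    {M P : Type*}
    [AddCommGroup M] [Module Λᵐᵒᵖ M] (ℳ : ℤ → AddSubgroup M) [DirectSum.Decomposition ℳ]
    [AddCommGroup P] [Module Λᵐᵒᵖ P] (𝒬 : ℤ → AddSubgroup P) [DirectSum.Decomposition 𝒬]
    (hP : ∀ (i n : ℤ), ∀ a ∈ 𝒜 i, ∀ m ∈ 𝒬 n, (MulOpposite.op a) • m ∈ 𝒬 (n + i))
    (hPproj : Module.Projective Λᵐᵒᵖ P)
    (hPgen : Submodule.span Λᵐᵒᵖ (𝒬 0 : Set P) = ⊤)
    (p : P →ₗ[Λᵐᵒᵖ] M)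
    (hpdeg : ∀ n : ℤ, ∀ x ∈ 𝒬 n, p x ∈ ℳ n)
    (hp0 : Set.BijOn p (𝒬 0 : Set P) (ℳ 0 : Set M)) :
    (∀ x ∈ LinearMap.ker p, ∀ n : ℤ,
        ((DirectSum.decompose 𝒬 x n : 𝒬 n) : P) ∈ LinearMap.ker p) ∧
    (∀ n : ℤ, n < 1 ∨ (d : ℤ) < n → ∀ x ∈ LinearMap.ker p, x ∈ 𝒬 n → x = 0) ∧
    ((sSup {S : Submodule Λᵐᵒᵖ P | IsSimpleModule Λᵐᵒᵖ S ∧ S ≤ LinearMap.ker p} :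
        Submodule Λᵐᵒᵖ P) : Set P) =
      (LinearMap.ker p : Set P) ∩ (𝒬 (d : ℤ) : Set P) := by
  have h𝒬 : ∀ i, ∀ a ∈ 𝒜 i, ∀ y ∈ 𝒬 0, op a • y ∈ 𝒬 i := fun i a ha y hy => by
    simpa only [zero_add] using hP i 0 a ha y hy
  refine ⟨fun x hx n => ?_, fun n hn x hx hxn => ?_, ?_⟩
  · rw [LinearMap.mem_ker, map_directSumDecompose_of_mapsTo 𝒬 ℳ p fun n x => hpdeg n x, hx,
      decompose_zero, DirectSum.zero_apply, ZeroMemClass.coe_zero]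
  · by_cases h0 : n = 0
    · subst h0
      exact hp0.injOn hxn (zero_mem _) (by rw [map_zero]; exact hx)
    · exact eq_zero_of_mem_of_eq_bot h𝒬 hPgen (hconc n (by omega)) hxn
  · have := isSemisimpleModule_sSup_simples Λᵐᵒᵖ Λ
    let Q := ⨆ y : (𝒬 0 : Set P), (sSup {T : Submodule Λᵐᵒᵖ Λ | IsSimpleModule Λᵐᵒᵖ T}).map
      (toSpanSingletonRight (y : P))
    have hQ : (Q : Set P) = 𝒬 d := coe_iSup_map_toSpanSingletonRight h𝒬 hPgen hsoc
    have : IsSemisimpleModule Λᵐᵒᵖ Q := isSemisimpleModule_iSup_map _ _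
    rw [Submodule.sSup_simples_le_eq_inf Q (fun S _ => le_iSup_map_sSup_simples hPgen S),
      Submodule.coe_inf, hQ]

/-- Let `d ≥ 1` and let `Λ` be an internally ℕ-graded ring with `𝒜 n = 0` for `n > d`,
`𝒜 0` semisimple, and socle of `Λ` as a right `Λ`-module equal to `𝒜 d`.  Let `M` be a
graded right `Λ`-module concentrated in degrees `0,…,d-1` and generated in degree 0, and
let `p : P → M` be a surjective degree-preserving map from a graded projective module
generated in degree 0 restricting to a bijection in degree 0.  Then `K = ker p` is a
graded submodule of `P` concentrated in degrees 1 through `d`, and the socle of `K`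
equals its degree-`d` component `K ∩ P_d`. -/
theorem stmt_12 {Λ : Type*} [Ring Λ] (d : ℕ) (hd : 1 ≤ d)
    (𝒜 : ℤ → AddSubgroup Λ) [GradedRing 𝒜]
    (hconc : ∀ n : ℤ, n < 0 ∨ (d : ℤ) < n → 𝒜 n = ⊥)
    (hss : IsSemisimpleRing (𝒜 0))
    (hsoc : ((sSup {S : Submodule Λᵐᵒᵖ Λ | IsSimpleModule Λᵐᵒᵖ S} :
        Submodule Λᵐᵒᵖ Λ) : Set Λ) = (𝒜 (d : ℤ) : Set Λ))
    {M P : Type*}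
    [AddCommGroup M] [Module Λᵐᵒᵖ M] (ℳ : ℤ → AddSubgroup M) [DirectSum.Decomposition ℳ]
    (hM : ∀ (i n : ℤ), ∀ a ∈ 𝒜 i, ∀ m ∈ ℳ n, (MulOpposite.op a) • m ∈ ℳ (n + i))
    (hMconc : ∀ n : ℤ, n < 0 ∨ (d : ℤ) - 1 < n → ℳ n = ⊥)
    (hMgen : Submodule.span Λᵐᵒᵖ (ℳ 0 : Set M) = ⊤)
    [AddCommGroup P] [Module Λᵐᵒᵖ P] (𝒬 : ℤ → AddSubgroup P) [DirectSum.Decomposition 𝒬]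
    (hP : ∀ (i n : ℤ), ∀ a ∈ 𝒜 i, ∀ m ∈ 𝒬 n, (MulOpposite.op a) • m ∈ 𝒬 (n + i))
    (hPproj : Module.Projective Λᵐᵒᵖ P)
    (hPgen : Submodule.span Λᵐᵒᵖ (𝒬 0 : Set P) = ⊤)
    (p : P →ₗ[Λᵐᵒᵖ] M) (hpsurj : Function.Surjective p)
    (hpdeg : ∀ n : ℤ, ∀ x ∈ 𝒬 n, p x ∈ ℳ n)
    (hp0 : Set.BijOn p (𝒬 0 : Set P) (ℳ 0 : Set M)) :
    (∀ x ∈ LinearMap.ker p, ∀ n : ℤ,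
        ((DirectSum.decompose 𝒬 x n : 𝒬 n) : P) ∈ LinearMap.ker p) ∧
    (∀ n : ℤ, n < 1 ∨ (d : ℤ) < n → ∀ x ∈ LinearMap.ker p, x ∈ 𝒬 n → x = 0) ∧
    ((sSup {S : Submodule Λᵐᵒᵖ P | IsSimpleModule Λᵐᵒᵖ S ∧ S ≤ LinearMap.ker p} :
        Submodule Λᵐᵒᵖ P) : Set P) =
      (LinearMap.ker p : Set P) ∩ (𝒬 (d : ℤ) : Set P) :=
  stmt_12_general d 𝒜 hconc hsoc ℳ 𝒬 hP hPproj hPgen p hpdeg hp0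
end
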